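/- arXiv:2501.02441 — 7 statements merged into one kernel-verified Lean document; each statement's English description precedes it below -/
import Mathlib

section
/- (a) If W is a token in {1,…,m} with ℙ(W = i) = p_i for all i, independent of (U_1, …, U_m) (the null hypothesis of no data misappropriation), then the pivotal statistic U_W is Uniform(0,1): ℙ(U_W ≤ r) = r for all r ∈ [0,1]. (b) Under complete inheritance, where the token equals the Gumbel-max selection I, the pivotal statistic Y = U_I satisfies ℙ(U_I ≤ r) = ∑_{i=1}^m p_i r^{1/p_i} for all r ∈ [0,1]. -/
open MeasureTheory ProbabilityTheory Filter Set ENNReal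

/-!
Conditionally on `U_i = t`, coordinate `i` wins the Gumbel-max selection iff
`log U_j < p_j log t / p_i`, i.e. `U_j < t ^ (p_j / p_i)`, for every `j ≠ i`; by independence this
has probability `∏_{j ≠ i} t ^ (p_j / p_i) = t ^ (1 / p_i - 1)`, and integrating over `t ≤ r` gives
`ℙ(I = i, U_i ≤ r) = p_i r ^ (1 / p_i)`. Under the null hypothesis, conditioning on `W = i` instead
leaves `U_W = U_i` uniform, so `ℙ(U_W ≤ r) = ∑_i p_i r = r`.
-/

local notation "𝕌" => (volume.restrict (Ioo (0:ℝ) 1) : Measure ℝ)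

instance : IsProbabilityMeasure 𝕌 := ⟨by simp⟩

lemma uniform_Iic {r : ℝ} (h1 : r ≤ 1) : 𝕌 (Iic r) = ENNReal.ofReal r := by
  rw [Measure.restrict_congr_set Ioo_ae_eq_Ioc, Measure.restrict_apply measurableSet_Iic,
    Iic_inter_Ioc_of_le h1, Real.volume_Ioc, sub_zero]

lemma uniform_log_lt {c : ℝ} (hc : c ≤ 0) :
    𝕌 {u | Real.log u < c} = ENNReal.ofReal (Real.exp c) := by
  have hset : {u | Real.log u < c} ∩ Ioo 0 1 = Ioo 0 (Real.exp c) := by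
    ext u
    simp only [mem_inter_iff, mem_ofPred_eq, mem_Ioo]
    constructor
    · rintro ⟨hlog, hu0, -⟩
      exact ⟨hu0, (Real.log_lt_iff_lt_exp hu0).1 hlog⟩
    · rintro ⟨hu0, hu⟩
      exact ⟨(Real.log_lt_iff_lt_exp hu0).2 hu, hu0, hu.trans_le (Real.exp_le_one_iff.2 hc)⟩
  rw [Measure.restrict_apply (measurableSet_lt Real.measurable_log measurable_const), hset,
    Real.volume_Ioo, sub_zero]

lemma pi_uniform_forall_log_lt {ι : Type*} [Fintype ι] (c : ι → ℝ) (hc : ∀ j, c j ≤ 0) :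
    Measure.pi (fun _ : ι => 𝕌) {y | ∀ j, Real.log (y j) < c j}
      = ENNReal.ofReal (Real.exp (∑ j, c j)) := by
  have hset : {y : ι → ℝ | ∀ j, Real.log (y j) < c j}
      = univ.pi fun j => {u | Real.log u < c j} := by
    ext y; simp
  rw [hset, Measure.pi_pi, Real.exp_sum,
    ENNReal.ofReal_prod_of_nonneg fun j _ => (Real.exp_pos _).le]
  exact Finset.prod_congr rfl fun j _ => uniform_log_lt (hc j)

lemma lintegral_Ioc_ofReal_rpow {r a : ℝ} (hr : 0 ≤ r) (ha : -1 < a) :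
    ∫⁻ t in Ioc 0 r, ENNReal.ofReal (t ^ a) = ENNReal.ofReal (r ^ (a + 1) / (a + 1)) := by
  have hint : IntegrableOn (fun t : ℝ => t ^ a) (Ioc 0 r) := by
    rw [← intervalIntegrable_iff_integrableOn_Ioc_of_le hr]
    exact intervalIntegral.intervalIntegrable_rpow' ha
  rw [← ofReal_integral_eq_lintegral_ofReal hint
    ((ae_restrict_iff' measurableSet_Ioc).2 (ae_of_all _ fun t ht => Real.rpow_nonneg ht.1.le a)),
    ← intervalIntegral.integral_of_le hr, integral_rpow (Or.inl ha),
    Real.zero_rpow (by linarith), sub_zero]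

def gumbelMaxEvent {ι : Type*} (p : ι → ℝ) (i : ι) : Set (ι → ℝ) :=
  {x | ∀ j, j ≠ i → Real.log (x j) / p j < Real.log (x i) / p i}

lemma measurableSet_gumbelMaxEvent {ι : Type*} [Countable ι] (p : ι → ℝ) (i : ι) :
    MeasurableSet (gumbelMaxEvent p i) := by
  refine measurableSet_setOfPred.2 (Measurable.forall fun j => Measurable.imp measurable_const ?_)
  exact measurableSet_setOfPred.1 <| measurableSet_lt
    ((Real.measurable_log.comp (measurable_pi_apply j)).div_const _)
    ((Real.measurable_log.comp (measurable_pi_apply i)).div_const _)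

lemma pairwise_disjoint_gumbelMaxEvent {ι : Type*} (p : ι → ℝ) :
    Pairwise (Function.onFun Disjoint (gumbelMaxEvent p)) := by
  intro i k hik
  refine disjoint_left.2 fun x hi hk => ?_
  exact (hi k hik.symm).asymm (hk i hik)

lemma lintegral_uniform_eq_setLIntegral_Ioc {f : ℝ → ℝ≥0∞} {r : ℝ} (h1 : r ≤ 1)
    (hf : ∀ t, r < t → f t = 0) : ∫⁻ t, f t ∂𝕌 = ∫⁻ t in Ioc 0 r, f t := by
  have hindicator : f = (Iic r).indicator f := by
    ext t
    rcases le_or_gt t r with ht | ht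
    · rw [indicator_of_mem (mem_Iic.2 ht)]
    · rw [indicator_of_notMem (notMem_Iic.2 ht), hf t ht]
  rw [hindicator, lintegral_indicator measurableSet_Iic, ← hindicator,
    Measure.restrict_congr_set Ioo_ae_eq_Ioc, Measure.restrict_restrict measurableSet_Iic,
    Iic_inter_Ioc_of_le h1]

lemma pi_uniform_forall_log_lt_succAbove {n : ℕ} (p : Fin (n + 1) → ℝ) (hp : ∀ i, 0 < p i)
    (hpsum : ∑ i, p i = 1) (i : Fin (n + 1)) {t : ℝ} (ht0 : 0 < t) (ht1 : t ≤ 1) :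
    Measure.pi (fun _ : Fin n => 𝕌)
        {y | ∀ j, Real.log (y j) < p (i.succAbove j) * (Real.log t / p i)}
      = ENNReal.ofReal (t ^ (1 / p i - 1)) := by
  have hlog : Real.log t / p i ≤ 0 :=
    div_nonpos_of_nonpos_of_nonneg (Real.log_nonpos ht0.le ht1) (hp i).le
  have hsum : ∑ j, p (i.succAbove j) = 1 - p i := by
    linarith [Fin.sum_univ_succAbove p i]
  have hpi : p i ≠ 0 := (hp i).ne'
  rw [pi_uniform_forall_log_lt _ fun j => mul_nonpos_of_nonneg_of_nonpos (hp _).le hlog,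
    ← Finset.sum_mul, hsum, Real.rpow_def_of_pos ht0]
  congr 2
  field_simp

lemma pi_uniform_le_inter_gumbelMaxEvent {m : ℕ} (p : Fin m → ℝ) (hp : ∀ i, 0 < p i)
    (hpsum : ∑ i, p i = 1) (i : Fin m) {r : ℝ} (h0 : 0 ≤ r) (h1 : r ≤ 1) :
    Measure.pi (fun _ : Fin m => 𝕌) ({x | x i ≤ r} ∩ gumbelMaxEvent p i)
      = ENNReal.ofReal (p i * r ^ (1 / p i)) := by
  obtain ⟨n, rfl⟩ : ∃ n, m = n + 1 := Nat.exists_eq_succ_of_ne_zero i.pos.ne'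
  set S : Set (ℝ × (Fin n → ℝ)) :=
    {z | z.1 ≤ r ∧ ∀ j, Real.log (z.2 j) < p (i.succAbove j) * (Real.log z.1 / p i)}
  have hS : MeasurableSet S := by
    refine measurableSet_setOfPred.2 <| (measurableSet_setOfPred.1 <|
      measurableSet_le measurable_fst measurable_const).and (Measurable.forall fun j => ?_)
    exact measurableSet_setOfPred.1 <| measurableSet_lt
      (Real.measurable_log.comp ((measurable_pi_apply j).comp measurable_snd))
      (measurable_const.mul ((Real.measurable_log.comp measurable_fst).div_const _))
  have hpre : MeasurableEquiv.piFinSuccAbove (fun _ => ℝ) i ⁻¹' S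
      = {x | x i ≤ r} ∩ gumbelMaxEvent p i := by
    ext x
    change (x i ≤ r ∧ ∀ j,
        Real.log (x (i.succAbove j)) < p (i.succAbove j) * (Real.log (x i) / p i))
      ↔ x i ≤ r ∧ x ∈ gumbelMaxEvent p i
    simp only [gumbelMaxEvent, mem_ofPred_eq, Fin.forall_iff_succAbove i, ne_eq,
      not_true_eq_false, IsEmpty.forall_iff, true_and, Fin.succAbove_ne i, not_false_eq_true,
      forall_const, div_lt_iff₀' (hp _)]
  have hslice : ∀ t ∈ Ioc 0 r, Measure.pi (fun _ : Fin n => 𝕌) (Prod.mk t ⁻¹' S)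
      = ENNReal.ofReal (t ^ (1 / p i - 1)) := by
    rintro t ⟨ht0, htr⟩
    convert pi_uniform_forall_log_lt_succAbove p hp hpsum i ht0 (htr.trans h1) using 2
    ext y
    simp [S, htr]
  rw [← hpre, (measurePreserving_piFinSuccAbove (fun _ => 𝕌) i).measure_preimage
      hS.nullMeasurableSet, Measure.prod_apply hS,
    lintegral_uniform_eq_setLIntegral_Ioc h1 fun t ht =>
      measure_mono_null (fun y hy => (ht.not_ge hy.1).elim) measure_empty,
    setLIntegral_congr_fun measurableSet_Ioc hslice,
    lintegral_Ioc_ofReal_rpow h0 (by linarith [one_div_pos.2 (hp i)]), sub_add_cancel]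
  congr 1
  field_simp

lemma pi_uniform_iUnion_le_inter_gumbelMaxEvent {m : ℕ} (p : Fin m → ℝ) (hp : ∀ i, 0 < p i)
    (hpsum : ∑ i, p i = 1) {r : ℝ} (h0 : 0 ≤ r) (h1 : r ≤ 1) :
    Measure.pi (fun _ : Fin m => 𝕌) (⋃ i, {x | x i ≤ r} ∩ gumbelMaxEvent p i)
      = ENNReal.ofReal (∑ i, p i * r ^ (1 / p i)) := by
  rw [measure_iUnion (fun i k hik => (pairwise_disjoint_gumbelMaxEvent p hik).mono
      inter_subset_right inter_subset_right)
    fun i => (measurableSet_le (measurable_pi_apply i) measurable_const).inter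
      (measurableSet_gumbelMaxEvent p i),
    tsum_fintype,
    ENNReal.ofReal_sum_of_nonneg fun i _ => mul_nonneg (hp i).le (Real.rpow_nonneg h0 _)]
  exact Finset.sum_congr rfl fun i _ => pi_uniform_le_inter_gumbelMaxEvent p hp hpsum i h0 h1

lemma mem_iUnion_le_inter_gumbelMaxEvent_iff {ι : Type*} {p : ι → ℝ} {x : ι → ℝ} {k : ι}
    (hk : x ∈ gumbelMaxEvent p k) (r : ℝ) :
    x ∈ ⋃ i, {x | x i ≤ r} ∩ gumbelMaxEvent p i ↔ x k ≤ r := by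
  refine ⟨fun hx => ?_, fun hx => mem_iUnion.2 ⟨k, hx, hk⟩⟩
  obtain ⟨i, hxi, hi⟩ := mem_iUnion.1 hx
  obtain rfl : i = k := by_contra fun hik =>
    (pairwise_disjoint_gumbelMaxEvent p hik).notMem_of_mem_left hi hk
  exact hxi

lemma measure_eval_mem_of_indepFun {Ω ι β : Type*} [MeasurableSpace Ω] {μ : Measure Ω}
    [Fintype ι] [MeasurableSpace ι] [MeasurableSingletonClass ι] [MeasurableSpace β]
    {W : Ω → ι} {V : Ω → ι → β} (hW : Measurable W) (hWV : IndepFun W V μ) {s : Set β}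
    (hs : MeasurableSet s) :
    μ {ω | V ω (W ω) ∈ s} = ∑ i, μ {ω | W ω = i} * μ {ω | V ω i ∈ s} := by
  have hpart : ∀ i,
      W ⁻¹' {i} ∩ {ω | V ω (W ω) ∈ s} = W ⁻¹' {i} ∩ V ⁻¹' ((fun x => x i) ⁻¹' s) := by
    intro i
    ext ω
    simp only [mem_inter_iff, mem_preimage, mem_singleton_iff, mem_ofPred_eq]
    constructor <;> rintro ⟨rfl, h⟩ <;> exact ⟨rfl, h⟩
  calc μ {ω | V ω (W ω) ∈ s}
      = μ.restrict {ω | V ω (W ω) ∈ s} (W ⁻¹' ↑(Finset.univ : Finset ι)) := by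
        rw [Finset.coe_univ, preimage_univ, Measure.restrict_apply_univ]
    _ = ∑ i, μ (W ⁻¹' {i} ∩ {ω | V ω (W ω) ∈ s}) := by
        rw [← sum_measure_preimage_singleton _ fun i _ => hW (measurableSet_singleton i)]
        exact Finset.sum_congr rfl fun i _ =>
          Measure.restrict_apply (hW (measurableSet_singleton i))
    _ = ∑ i, μ {ω | W ω = i} * μ {ω | V ω i ∈ s} := by
        refine Finset.sum_congr rfl fun i _ => ?_
        rw [hpart, hWV.measure_inter_preimage_eq_mul _ _ (measurableSet_singleton i)
          (measurable_pi_apply i hs)]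
        rfl

theorem stmt_1_general
    {Ω : Type*} [MeasurableSpace Ω] (μ : Measure Ω)
    (m : ℕ) (p : Fin m → ℝ)
    (hp : ∀ i, 0 < p i) (hpsum : ∑ i, p i = 1)
    (U : Fin m → Ω → ℝ) (hUmeas : ∀ i, Measurable (U i))
    (hUlaw : Measure.map (fun ω i => U i ω) μ
      = Measure.pi fun _ : Fin m => volume.restrict (Set.Ioo (0:ℝ) 1))
    (I : Ω → Fin m)
    (hI : ∀ᵐ ω ∂μ, ∀ j, j ≠ I ω →
      Real.log (U j ω) / p j < Real.log (U (I ω) ω) / p (I ω))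
    (W : Ω → Fin m) (hWmeas : Measurable W)
    (hWlaw : ∀ i, μ {ω | W ω = i} = ENNReal.ofReal (p i))
    (hWindep : IndepFun W (fun ω i => U i ω) μ) :
    (∀ r ∈ Set.Icc (0:ℝ) 1, μ {ω | U (W ω) ω ≤ r} = ENNReal.ofReal r)
    ∧ (∀ r ∈ Set.Icc (0:ℝ) 1,
        μ {ω | U (I ω) ω ≤ r} = ENNReal.ofReal (∑ i, p i * r ^ (1 / p i))) := by
  have hV : Measurable fun ω i => U i ω := measurable_pi_lambda _ hUmeas
  have hlaw : ∀ s, MeasurableSet s →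
      μ ((fun ω i => U i ω) ⁻¹' s) = Measure.pi (fun _ => 𝕌) s :=
    fun s hs => by rw [← Measure.map_apply hV hs, hUlaw]
  refine ⟨fun r hr => ?_, fun r hr => ?_⟩
  · have hcoord : ∀ i, μ {ω | U i ω ≤ r} = ENNReal.ofReal r := fun i => calc
      μ {ω | U i ω ≤ r} = Measure.pi (fun _ => 𝕌) (Function.eval i ⁻¹' Iic r) :=
        hlaw _ (measurable_pi_apply i measurableSet_Iic)
      _ = 𝕌 (Iic r) := (measurePreserving_eval _ i).measure_preimage
        measurableSet_Iic.nullMeasurableSet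
      _ = ENNReal.ofReal r := uniform_Iic hr.2
    change μ {ω | U (W ω) ω ∈ Iic r} = _
    rw [measure_eval_mem_of_indepFun hWmeas hWindep measurableSet_Iic]
    simp only [mem_Iic, hWlaw, hcoord, ← Finset.sum_mul]
    rw [← ENNReal.ofReal_sum_of_nonneg fun i _ => (hp i).le, hpsum, ENNReal.ofReal_one, one_mul]
  · have hae : {ω | U (I ω) ω ≤ r}
        =ᵐ[μ] (fun ω i => U i ω) ⁻¹' ⋃ i, {x | x i ≤ r} ∩ gumbelMaxEvent p i := by
      filter_upwards [hI] with ω hω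
      exact propext (mem_iUnion_le_inter_gumbelMaxEvent_iff hω r).symm
    rw [measure_congr hae, hlaw _ (MeasurableSet.iUnion fun i =>
        (measurableSet_le (measurable_pi_apply i) measurable_const).inter
          (measurableSet_gumbelMaxEvent p i)),
      pi_uniform_iUnion_le_inter_gumbelMaxEvent p hp hpsum hr.1 hr.2]

/-- Gumbel-max watermark pivotal statistic.
(a) If `W` is a token with law `p`, independent of `(U_1, …, U_m)` (null hypothesis of no data
misappropriation), then the pivotal statistic `U_W` is `Uniform(0,1)`:
`ℙ(U_W ≤ r) = r` for all `r ∈ [0,1]`.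
(b) Under complete inheritance, where the token equals the Gumbel-max selection `I`, the pivotal
statistic `Y = U_I` satisfies `ℙ(U_I ≤ r) = ∑ i, p i * r ^ (1 / p i)` for all `r ∈ [0,1]`. -/
theorem stmt_1
    {Ω : Type*} [MeasurableSpace Ω] (μ : Measure Ω) [IsProbabilityMeasure μ]
    (m : ℕ) (hm : 2 ≤ m) (p : Fin m → ℝ)
    (hp : ∀ i, 0 < p i) (hpsum : ∑ i, p i = 1)
    (U : Fin m → Ω → ℝ) (hUmeas : ∀ i, Measurable (U i))
    (hUlaw : Measure.map (fun ω i => U i ω) μ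
      = Measure.pi fun _ : Fin m => volume.restrict (Set.Ioo (0:ℝ) 1))
    (I : Ω → Fin m) (hImeas : Measurable I)
    (hI : ∀ᵐ ω ∂μ, ∀ j, j ≠ I ω →
      Real.log (U j ω) / p j < Real.log (U (I ω) ω) / p (I ω))
    (W : Ω → Fin m) (hWmeas : Measurable W)
    (hWlaw : ∀ i, μ {ω | W ω = i} = ENNReal.ofReal (p i))
    (hWindep : IndepFun W (fun ω i => U i ω) μ) :
    (∀ r ∈ Set.Icc (0:ℝ) 1, μ {ω | U (W ω) ω ≤ r} = ENNReal.ofReal r)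
    ∧ (∀ r ∈ Set.Icc (0:ℝ) 1,
        μ {ω | U (I ω) ω ≤ r} = ENNReal.ofReal (∑ i, p i * r ^ (1 / p i))) :=
  stmt_1_general μ m p hp hpsum U hUmeas hUlaw I hI W hWmeas hWlaw hWindep
end

section
/- Under the partial-inheritance Gumbel-max model, the pivotal statistic Y = U_W satisfies, for every r ∈ [0,1], ℙ(Y ≤ r) = ∑_{i=1}^m ∑_{j ≠ i} [p_i/(1 − p_j)] (r − p_j r^{1/p_j}) q_{ij} + ∑_{i=1}^m p_i r^{1/p_i} q_{ii}. -/
open MeasureTheory ProbabilityTheory Filter Set ENNReal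

/-!
Given `U_i = t`, the event `I = i` says `U_k < t ^ (p_k / p_i)` for every `k ≠ i`, a box of volume
`t ^ ((1 - p_i) / p_i)`. Adding `U_j ≤ r` restricts `t` to `(0, r]` if `j = i`, and otherwise caps
the `j`-th side of the box at `min r (t ^ (p_j / p_i))`. Integrating over `t` gives
`ℙ(I = i, U_j ≤ r)` in closed form, and as `W` is drawn from row `I` of `Q` given the `U`'s,
`ℙ(Y ≤ r) = ∑_{i,j} q_{ij} ℙ(I = i, U_j ≤ r)`.
-/

lemma log_div_lt_log_div_iff {x y a b : ℝ} (hx : 0 < x) (hy : 0 < y) (ha : 0 < a) (hb : 0 < b) :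
    Real.log x / a < Real.log y / b ↔ x < y ^ (a / b) := by
  rw [← Real.log_lt_log_iff hx (Real.rpow_pos_of_pos hy _), Real.log_rpow hy,
    div_lt_div_iff₀ ha hb, div_mul_eq_mul_div, lt_div_iff₀ hb, mul_comm a]

lemma lt_one_of_sum_eq_one {ι : Type*} [Fintype ι] {p : ι → ℝ} (hp : ∀ k, 0 < p k)
    (hpsum : ∑ k, p k = 1) {i j : ι} (hji : j ≠ i) : p j < 1 := by
  classical
  have : p i + p j ≤ ∑ k, p k := by
    rw [← Finset.sum_pair hji.symm]
    exact Finset.sum_le_sum_of_subset_of_nonneg (Finset.subset_univ _)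
      fun k _ _ => (hp k).le
  linarith [hp i]

lemma lintegral_Ioc_rpow {a b c : ℝ} (ha : 0 ≤ a) (hab : a ≤ b) (hc : -1 < c) :
    ∫⁻ t in Ioc a b, ENNReal.ofReal (t ^ c)
      = ENNReal.ofReal ((b ^ (c + 1) - a ^ (c + 1)) / (c + 1)) := by
  rw [← ofReal_integral_eq_lintegral_ofReal (intervalIntegral.intervalIntegrable_rpow' hc).1,
    ← intervalIntegral.integral_of_le hab, integral_rpow (Or.inl hc)]
  filter_upwards [ae_restrict_mem measurableSet_Ioc] with t ht
  exact Real.rpow_nonneg (ha.trans ht.1.le) c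

lemma lintegral_Ioc_zero_rpow_one_sub_div {p r : ℝ} (hp : 0 < p) (hr : 0 ≤ r) :
    ∫⁻ t in Ioc 0 r, ENNReal.ofReal (t ^ ((1 - p) / p)) = ENNReal.ofReal (p * r ^ (1 / p)) := by
  have hc : (1 - p) / p + 1 = 1 / p := by field_simp; ring
  rw [lintegral_Ioc_rpow le_rfl hr (by linarith [hc, one_div_pos.2 hp]), hc,
    Real.zero_rpow (one_div_pos.2 hp).ne', sub_zero, div_div_eq_mul_div, div_one, mul_comm]

lemma lintegral_Ioc_min_mul_rpow {p q r : ℝ} (hp : 0 < p) (hq : 0 < q) (hq1 : q < 1)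
    (hr0 : 0 ≤ r) (hr1 : r ≤ 1) :
    ∫⁻ t in Ioc 0 1, ENNReal.ofReal (min r (t ^ (q / p)) * t ^ ((1 - p - q) / p))
      = ENNReal.ofReal (p / (1 - q) * (r - q * r ^ (1 / q))) := by
  have h1q : 0 < 1 - q := sub_pos.2 hq1
  -- `t₀` is where `t ^ (q / p)` crosses `r`.
  set t₀ := r ^ (p / q)
  have ht₀0 : 0 ≤ t₀ := Real.rpow_nonneg hr0 _
  have ht₀1 : t₀ ≤ 1 := Real.rpow_le_one hr0 hr1 (div_pos hp hq).le
  have ht₀_pow {e : ℝ} : t₀ ^ e = r ^ (p / q * e) := (Real.rpow_mul hr0 _ _).symm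
  have hβ : (1 - p - q) / p + 1 = (1 - q) / p := by field_simp; ring
  have h_lower :
      ∫⁻ t in Ioc 0 t₀, ENNReal.ofReal (min r (t ^ (q / p)) * t ^ ((1 - p - q) / p))
      = ENNReal.ofReal (p * r ^ (1 / q)) := by
    have hle : ∀ t ∈ Ioc 0 t₀, t ^ (q / p) ≤ r := fun t ht => by
      simpa [ht₀_pow, hp.ne', hq.ne'] using
        Real.rpow_le_rpow ht.1.le ht.2 (div_pos hq hp).le
    rw [setLIntegral_congr_fun measurableSet_Ioc fun t ht => by
        rw [min_eq_right (hle t ht), ← Real.rpow_add ht.1, ← add_div,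
          show q + (1 - p - q) = 1 - p by ring],
      lintegral_Ioc_zero_rpow_one_sub_div hp ht₀0, ht₀_pow]
    field_simp
  have h_upper :
      ∫⁻ t in Ioc t₀ 1, ENNReal.ofReal (min r (t ^ (q / p)) * t ^ ((1 - p - q) / p))
      = ENNReal.ofReal (r * (p / (1 - q) * (1 - r ^ ((1 - q) / q)))) := by
    have hge : ∀ t ∈ Ioc t₀ 1, r ≤ t ^ (q / p) := fun t ht => by
      simpa [ht₀_pow, hp.ne', hq.ne'] using
        Real.rpow_le_rpow ht₀0 ht.1.le (div_pos hq hp).le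
    rw [setLIntegral_congr_fun measurableSet_Ioc fun t ht => by
        rw [min_eq_left (hge t ht), ENNReal.ofReal_mul hr0],
      lintegral_const_mul' _ _ ofReal_ne_top,
      lintegral_Ioc_rpow ht₀0 ht₀1 (by linarith [div_pos h1q hp]), hβ,
      Real.one_rpow, ht₀_pow, ← ENNReal.ofReal_mul hr0]
    congr 2
    field_simp
  rw [← Ioc_union_Ioc_eq_Ioc ht₀0 ht₀1, lintegral_union measurableSet_Ioc
    (Ioc_disjoint_Ioc_of_le le_rfl), h_lower, h_upper, ← ENNReal.ofReal_add]
  · have hr_pow : r ^ (1 / q) = r * r ^ ((1 - q) / q) := by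
      rw [← Real.rpow_one_add' hr0 (by positivity)]
      congr 1
      field_simp
      ring
    have := h1q.ne'
    congr 1
    rw [hr_pow]
    field_simp
    ring
  · positivity
  · have : r ^ ((1 - q) / q) ≤ 1 := Real.rpow_le_one hr0 hr1 (div_pos h1q hq).le
    positivity

lemma uniform_Iio {a : ℝ} (ha : a ≤ 1) :
    volume.restrict (Ioo (0:ℝ) 1) (Iio a) = ENNReal.ofReal a := by
  rw [Measure.restrict_apply measurableSet_Iio, Iio_inter_Ioo, Real.volume_Ioo, min_eq_left ha,
    sub_zero]

lemma uniform_Iic_inter_Iio {r a : ℝ} (ha : a ≤ 1) :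
    volume.restrict (Ioo (0:ℝ) 1) (Iic r ∩ Iio a) = ENNReal.ofReal (min r a) := by
  have h : (Iic r ∩ Iio a : Set ℝ) =ᵐ[volume.restrict (Ioo (0:ℝ) 1)] Iio (min r a) := by
    rw [← Iio_inter_Iio]
    exact Iio_ae_eq_Iic.symm.inter (ae_eq_refl _)
  rw [measure_congr h, uniform_Iio (min_le_of_right_le ha)]

lemma MeasureTheory.Measure.pi_eq_lintegral_insertNth {n : ℕ} {α : Type*} [MeasurableSpace α]
    (ν : Measure α) [SigmaFinite ν] (i : Fin (n + 1)) {S : Set (Fin (n + 1) → α)}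
    (hS : MeasurableSet S) :
    Measure.pi (fun _ => ν) S
      = ∫⁻ t, Measure.pi (fun _ => ν) (i.insertNth (α := fun _ => α) t ⁻¹' S) ∂ν := by
  have e := (measurePreserving_piFinSuccAbove (fun _ => ν) i).symm
  rw [← e.measure_preimage_equiv, Measure.prod_apply (hS.preimage e.measurable)]
  rfl

/-- On positive vectors, the event `argmax_k (log u_k) / p_k = i`. -/
def gumbelArgmaxSet {ι : Type*} (p : ι → ℝ) (i : ι) : Set (ι → ℝ) :=
  {u | ∀ k, k ≠ i → u k < u i ^ (p k / p i)}

lemma eq_iff_mem_gumbelArgmaxSet {ι : Type*} {p : ι → ℝ} (hp : ∀ k, 0 < p k) {u : ι → ℝ}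
    (hu : ∀ k, 0 < u k) {i₀ : ι}
    (h : ∀ k, k ≠ i₀ → Real.log (u k) / p k < Real.log (u i₀) / p i₀) (i : ι) :
    i₀ = i ↔ u ∈ gumbelArgmaxSet p i := by
  constructor
  · rintro rfl k hk
    exact (log_div_lt_log_div_iff (hu k) (hu i₀) (hp k) (hp i₀)).1 (h k hk)
  · intro hi
    by_contra hne
    have h₁ := h i (Ne.symm hne)
    have h₂ := (log_div_lt_log_div_iff (hu i₀) (hu i) (hp i₀) (hp i)).2 (hi i₀ hne)
    linarith

lemma measurableSet_gumbelArgmaxSet {ι : Type*} [Countable ι] (p : ι → ℝ) (i : ι) :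
    MeasurableSet (gumbelArgmaxSet p i) := by
  simp only [gumbelArgmaxSet, ofPred_forall]
  exact .iInter fun k => .iInter fun _ =>
    measurableSet_lt (measurable_pi_apply k) ((measurable_pi_apply i).pow_const _)

/-- `ℙ(I = i, U_j ≤ r)` under the Gumbel-max rule. -/
noncomputable def gumbelJointCDF {ι : Type*} [DecidableEq ι] (p : ι → ℝ) (r : ℝ) (i j : ι) :
    ℝ :=
  if j = i then p i * r ^ (1 / p i) else p i / (1 - p j) * (r - p j * r ^ (1 / p j))

lemma gumbelJointCDF_nonneg {ι : Type*} [Fintype ι] [DecidableEq ι] {p : ι → ℝ}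
    (hp : ∀ k, 0 < p k) (hpsum : ∑ k, p k = 1) {r : ℝ} (hr0 : 0 ≤ r) (hr1 : r ≤ 1) (i j : ι) :
    0 ≤ gumbelJointCDF p r i j := by
  rw [gumbelJointCDF]
  split_ifs with hji
  · exact mul_nonneg (hp i).le (Real.rpow_nonneg hr0 _)
  · have hpj := lt_one_of_sum_eq_one hp hpsum hji
    have hpow : r ^ (1 / p j) ≤ r := by
      simpa using Real.rpow_le_rpow_of_exponent_ge' hr0 hr1 zero_le_one
        (one_le_one_div (hp j) hpj.le)
    refine mul_nonneg (div_nonneg (hp i).le (sub_pos.2 hpj).le) ?_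
    nlinarith [Real.rpow_nonneg hr0 (1 / p j)]

lemma sum_sum_gumbelJointCDF_mul {ι : Type*} [Fintype ι] [DecidableEq ι] (p : ι → ℝ) (r : ℝ)
    (q : ι → ι → ℝ) :
    ∑ i, ∑ j, gumbelJointCDF p r i j * q i j
      = ∑ i, ∑ j ∈ Finset.univ \ {i}, p i / (1 - p j) * (r - p j * r ^ (1 / p j)) * q i j
        + ∑ i, p i * r ^ (1 / p i) * q i i := by
  rw [← Finset.sum_add_distrib]
  refine Finset.sum_congr rfl fun i _ => ?_
  rw [Finset.sum_eq_sum_sdiff_singleton_add (Finset.mem_univ i), gumbelJointCDF, if_pos rfl]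
  congr 1
  refine Finset.sum_congr rfl fun j hj => ?_
  rw [gumbelJointCDF, if_neg (by simpa using hj)]

section UniformCube

variable {n : ℕ} {p : Fin (n + 1) → ℝ}

lemma sum_succAbove_div (hpsum : ∑ k, p k = 1) (i : Fin (n + 1)) :
    ∑ k, p (i.succAbove k) / p i = (1 - p i) / p i := by
  rw [← Finset.sum_div, ← hpsum, Fin.sum_univ_succAbove p i, add_sub_cancel_left]

lemma measurableSet_gumbelArgmaxSet_inter_le (p : Fin (n + 1) → ℝ) (i j : Fin (n + 1))
    (r : ℝ) :
    MeasurableSet (gumbelArgmaxSet p i ∩ {u | u j ≤ r}) :=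
  (measurableSet_gumbelArgmaxSet p i).inter
    (measurableSet_le (measurable_pi_apply j) measurable_const)

lemma insertNth_preimage_gumbelArgmaxSet_inter_le_succAbove (p : Fin (n + 1) → ℝ)
    (i : Fin (n + 1)) (j₀ : Fin n) (r t : ℝ) :
    i.insertNth (α := fun _ => ℝ) t ⁻¹' (gumbelArgmaxSet p i ∩ {u | u (i.succAbove j₀) ≤ r})
      = univ.pi fun k => if k = j₀ then Iic r ∩ Iio (t ^ (p (i.succAbove k) / p i))
          else Iio (t ^ (p (i.succAbove k) / p i)) := by
  ext v
  simp only [gumbelArgmaxSet, Fin.forall_iff_succAbove i, Set.mem_pi, mem_preimage,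
    mem_inter_iff, mem_ofPred_eq, Fin.insertNth_apply_same, Fin.insertNth_apply_succAbove]
  constructor
  · rintro ⟨hlt, hle⟩ k -
    split_ifs with hk
    · exact ⟨hk ▸ hle, hlt.2 k (Fin.succAbove_ne i k)⟩
    · exact hlt.2 k (Fin.succAbove_ne i k)
  · intro h
    refine ⟨⟨fun h => absurd rfl h, fun k _ => ?_⟩, ?_⟩
    · have := h k (mem_univ k)
      split_ifs at this
      exacts [this.2, this]
    · have := h j₀ (mem_univ j₀)
      rw [if_pos rfl] at this
      exact this.1

lemma uniformPi_gumbelArgmaxSet_inter_le_self (hp : ∀ k, 0 < p k) (hpsum : ∑ k, p k = 1)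
    (i : Fin (n + 1)) {r : ℝ} (hr0 : 0 ≤ r) (hr1 : r ≤ 1) :
    Measure.pi (fun _ => volume.restrict (Ioo (0:ℝ) 1)) (gumbelArgmaxSet p i ∩ {u | u i ≤ r})
      = ENNReal.ofReal (p i * r ^ (1 / p i)) := by
  have slice : ∀ t ∈ Ioc (0:ℝ) 1,
      Measure.pi (fun _ => volume.restrict (Ioo (0:ℝ) 1))
        (i.insertNth (α := fun _ => ℝ) t ⁻¹' (gumbelArgmaxSet p i ∩ {u | u i ≤ r}))
      = (Iic r).indicator (fun t => ENNReal.ofReal (t ^ ((1 - p i) / p i))) t := by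
    intro t ht
    by_cases htr : t ≤ r
    · have hbox : i.insertNth (α := fun _ => ℝ) t ⁻¹' (gumbelArgmaxSet p i ∩ {u | u i ≤ r})
          = univ.pi fun k => Iio (t ^ (p (i.succAbove k) / p i)) := by
        ext v
        simp [gumbelArgmaxSet, Fin.forall_iff_succAbove i, htr]
      rw [indicator_of_mem (mem_Iic.2 htr), hbox, Measure.pi_pi]
      simp_rw [uniform_Iio (Real.rpow_le_one ht.1.le ht.2 (div_pos (hp _) (hp i)).le)]
      rw [← ENNReal.ofReal_prod_of_nonneg fun k _ => Real.rpow_nonneg ht.1.le _,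
        ← Real.rpow_sum_of_pos ht.1, sum_succAbove_div hpsum]
    · have hempty : i.insertNth (α := fun _ => ℝ) t ⁻¹' (gumbelArgmaxSet p i ∩ {u | u i ≤ r})
          = ∅ := by
        ext v
        simp [htr]
      rw [indicator_of_notMem (mt mem_Iic.1 htr), hempty, measure_empty]
  rw [Measure.pi_eq_lintegral_insertNth _ i (measurableSet_gumbelArgmaxSet_inter_le p i i r),
    setLIntegral_congr Ioo_ae_eq_Ioc, setLIntegral_congr_fun measurableSet_Ioc slice,
    lintegral_indicator measurableSet_Iic, Measure.restrict_restrict measurableSet_Iic,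
    Iic_inter_Ioc_of_le hr1, lintegral_Ioc_zero_rpow_one_sub_div (hp i) hr0]

lemma uniformPi_gumbelArgmaxSet_inter_le_of_ne (hp : ∀ k, 0 < p k) (hpsum : ∑ k, p k = 1)
    {i j : Fin (n + 1)} (hji : j ≠ i) {r : ℝ} (hr0 : 0 ≤ r) (hr1 : r ≤ 1) :
    Measure.pi (fun _ => volume.restrict (Ioo (0:ℝ) 1)) (gumbelArgmaxSet p i ∩ {u | u j ≤ r})
      = ENNReal.ofReal (p i / (1 - p j) * (r - p j * r ^ (1 / p j))) := by
  have hpj := lt_one_of_sum_eq_one hp hpsum hji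
  obtain ⟨j₀, rfl⟩ := Fin.exists_succAbove_eq hji
  set e : Fin n → ℝ := fun k => p (i.succAbove k) / p i with he
  have slice : ∀ t ∈ Ioc (0:ℝ) 1,
      Measure.pi (fun _ => volume.restrict (Ioo (0:ℝ) 1))
        (i.insertNth (α := fun _ => ℝ) t ⁻¹'
          (gumbelArgmaxSet p i ∩ {u | u (i.succAbove j₀) ≤ r}))
      = ENNReal.ofReal (min r (t ^ e j₀) * t ^ ((1 - p i - p (i.succAbove j₀)) / p i)) := by
    intro t ht
    have he1 : ∀ k, t ^ e k ≤ 1 := fun k =>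
      Real.rpow_le_one ht.1.le ht.2 (div_pos (hp _) (hp i)).le
    rw [insertNth_preimage_gumbelArgmaxSet_inter_le_succAbove, Measure.pi_pi,
      ← Finset.mul_prod_erase _ _ (Finset.mem_univ j₀), if_pos rfl,
      uniform_Iic_inter_Iio (he1 j₀),
      Finset.prod_congr rfl fun k hk => by
        rw [if_neg (Finset.ne_of_mem_erase hk), uniform_Iio (he1 k)],
      ← ENNReal.ofReal_prod_of_nonneg fun k _ => Real.rpow_nonneg ht.1.le _,
      ← Real.rpow_sum_of_pos ht.1, Finset.sum_erase_eq_sub (Finset.mem_univ j₀),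
      sum_succAbove_div hpsum,
      ← ENNReal.ofReal_mul (le_min hr0 (Real.rpow_nonneg ht.1.le _)), he, ← sub_div]
  rw [Measure.pi_eq_lintegral_insertNth _ i (measurableSet_gumbelArgmaxSet_inter_le p i _ r),
    setLIntegral_congr Ioo_ae_eq_Ioc, setLIntegral_congr_fun measurableSet_Ioc slice,
    lintegral_Ioc_min_mul_rpow (hp i) (hp _) hpj hr0 hr1]

lemma uniformPi_gumbelArgmaxSet_inter_le (hp : ∀ k, 0 < p k) (hpsum : ∑ k, p k = 1) {r : ℝ}
    (hr0 : 0 ≤ r) (hr1 : r ≤ 1) (i j : Fin (n + 1)) :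
    Measure.pi (fun _ => volume.restrict (Ioo (0:ℝ) 1)) (gumbelArgmaxSet p i ∩ {u | u j ≤ r})
      = ENNReal.ofReal (gumbelJointCDF p r i j) := by
  rw [gumbelJointCDF]
  split_ifs with hji
  · subst hji
    exact uniformPi_gumbelArgmaxSet_inter_le_self hp hpsum j hr0 hr1
  · exact uniformPi_gumbelArgmaxSet_inter_le_of_ne hp hpsum hji hr0 hr1

end UniformCube

section Model

variable {Ω ι : Type*} [MeasurableSpace Ω] {μ : Measure Ω} [Fintype ι]

lemma measure_preimage_inter_preimage_eq_uniformPi {p : ι → ℝ} (hp : ∀ k, 0 < p k)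
    {V : Ω → ι → ℝ} (hV : Measurable V)
    (hlaw : μ.map V = Measure.pi fun _ => volume.restrict (Ioo (0:ℝ) 1)) {I : Ω → ι}
    (hI : ∀ᵐ ω ∂μ, ∀ j, j ≠ I ω → Real.log (V ω j) / p j < Real.log (V ω (I ω)) / p (I ω))
    (i : ι) {B : Set (ι → ℝ)} (hB : MeasurableSet B) :
    μ (I ⁻¹' {i} ∩ V ⁻¹' B)
      = Measure.pi (fun _ => volume.restrict (Ioo (0:ℝ) 1)) (gumbelArgmaxSet p i ∩ B) := by
  have hpos : ∀ᵐ ω ∂μ, ∀ k, 0 < V ω k := by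
    refine ae_of_ae_map (p := fun u => ∀ k, 0 < u k) hV.aemeasurable ?_
    rw [hlaw]
    exact ae_all_iff.2 fun k => Measure.tendsto_eval_ae_ae.eventually
      ((ae_restrict_mem measurableSet_Ioo).mono fun x hx => hx.1)
  rw [← hlaw, Measure.map_apply hV ((measurableSet_gumbelArgmaxSet p i).inter hB)]
  refine measure_congr ?_
  filter_upwards [hI, hpos] with ω hω hω'
  exact propext (and_congr_left' (eq_iff_mem_gumbelArgmaxSet hp hω' hω i))

lemma setLIntegral_comp_fintype [MeasurableSpace ι] [MeasurableSingletonClass ι] {I : Ω → ι}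
    (hI : Measurable I) (f : ι → ℝ≥0∞) (s : Set Ω) :
    ∫⁻ ω in s, f (I ω) ∂μ = ∑ i, f i * μ (I ⁻¹' {i} ∩ s) := by
  rw [← lintegral_map (measurable_of_finite f) hI, lintegral_fintype]
  refine Finset.sum_congr rfl fun i _ => ?_
  rw [Measure.map_apply hI (measurableSet_singleton i),
    Measure.restrict_apply (hI (measurableSet_singleton i))]

lemma measure_apply_index_le_eq_sum [MeasurableSpace ι] [MeasurableSingletonClass ι]
    {V : Ω → ι → ℝ} {W : Ω → ι} (hW : Measurable W) (r : ℝ) :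
    μ {ω | V ω (W ω) ≤ r} = ∑ j, μ ({ω | W ω = j} ∩ V ⁻¹' {u | u j ≤ r}) := by
  rw [← Measure.restrict_apply_univ, ← preimage_univ (f := W), ← Finset.coe_univ,
    ← sum_measure_preimage_singleton _ fun j _ => hW (measurableSet_singleton j)]
  refine Finset.sum_congr rfl fun j _ => ?_
  rw [Measure.restrict_apply (hW (measurableSet_singleton j))]
  congr 1
  ext ω
  simp only [mem_inter_iff, mem_preimage, mem_singleton_iff, mem_ofPred_eq]
  exact and_congr_right fun h => h ▸ Iff.rfl

end Model

theorem stmt_3_general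
    {Ω : Type*} [MeasurableSpace Ω] (μ : Measure Ω)
    (m : ℕ) (hm : 2 ≤ m) (p : Fin m → ℝ)
    (hp : ∀ i, 0 < p i) (hpsum : ∑ i, p i = 1)
    (U : Fin m → Ω → ℝ) (hUmeas : ∀ i, Measurable (U i))
    (hUlaw : Measure.map (fun ω i => U i ω) μ
      = Measure.pi fun _ : Fin m => volume.restrict (Set.Ioo (0:ℝ) 1))
    (I : Ω → Fin m) (hImeas : Measurable I)
    (hI : ∀ᵐ ω ∂μ, ∀ j, j ≠ I ω →
      Real.log (U j ω) / p j < Real.log (U (I ω) ω) / p (I ω))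
    (q : Fin m → Fin m → ℝ) (hq0 : ∀ i j, 0 ≤ q i j)
    (W : Ω → Fin m) (hWmeas : Measurable W)
    (hW : ∀ (j : Fin m) (A : Set (Fin m → ℝ)), MeasurableSet A →
      μ ({ω | W ω = j} ∩ (fun ω i => U i ω) ⁻¹' A)
        = ∫⁻ ω in (fun ω i => U i ω) ⁻¹' A, ENNReal.ofReal (q (I ω) j) ∂μ) :
    ∀ r ∈ Set.Icc (0:ℝ) 1,
      μ {ω | U (W ω) ω ≤ r}
        = ENNReal.ofReal
            (∑ i, ∑ j ∈ Finset.univ \ {i},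
                p i / (1 - p j) * (r - p j * r ^ (1 / p j)) * q i j
              + ∑ i, p i * r ^ (1 / p i) * q i i) := by
  rintro r ⟨hr0, hr1⟩
  obtain ⟨n, rfl⟩ := Nat.exists_eq_succ_of_ne_zero (by omega : m ≠ 0)
  set V : Ω → Fin (n + 1) → ℝ := fun ω i => U i ω
  have hB : ∀ j, MeasurableSet {u : Fin (n + 1) → ℝ | u j ≤ r} :=
    fun j => measurableSet_le (measurable_pi_apply j) measurable_const
  have hF := gumbelJointCDF_nonneg hp hpsum hr0 hr1
  calc μ {ω | U (W ω) ω ≤ r}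
      = ∑ j, μ ({ω | W ω = j} ∩ V ⁻¹' {u | u j ≤ r}) :=
        measure_apply_index_le_eq_sum (V := V) hWmeas r
    _ = ∑ j, ∑ i, ENNReal.ofReal (q i j) * ENNReal.ofReal (gumbelJointCDF p r i j) := by
      refine Finset.sum_congr rfl fun j _ => ?_
      rw [hW j _ (hB j), setLIntegral_comp_fintype hImeas fun i => ENNReal.ofReal (q i j)]
      refine Finset.sum_congr rfl fun i _ => ?_
      rw [measure_preimage_inter_preimage_eq_uniformPi hp (measurable_pi_lambda _ hUmeas) hUlaw
        hI i (hB j), uniformPi_gumbelArgmaxSet_inter_le hp hpsum hr0 hr1]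
    _ = ENNReal.ofReal (∑ i, ∑ j, gumbelJointCDF p r i j * q i j) := by
      rw [Finset.sum_comm, ENNReal.ofReal_sum_of_nonneg fun i _ =>
        Finset.sum_nonneg fun j _ => mul_nonneg (hF i j) (hq0 i j)]
      refine Finset.sum_congr rfl fun i _ => ?_
      rw [ENNReal.ofReal_sum_of_nonneg fun j _ => mul_nonneg (hF i j) (hq0 i j)]
      refine Finset.sum_congr rfl fun j _ => ?_
      rw [mul_comm, ENNReal.ofReal_mul (hF i j)]
    _ = _ := by rw [sum_sum_gumbelJointCDF_mul]

/-- Partial-inheritance Gumbel-max model: `U_1, …, U_m` are i.i.d.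
`Uniform(0,1)`, `I = argmax_i (log U_i)/p_i`, `Q = (q_{ij})` is row-stochastic, and,
conditionally on `(U_1, …, U_m)`, the token `W` equals `j` with probability `q_{I j}`.
Then the pivotal statistic `Y = U_W` satisfies, for every `r ∈ [0,1]`,
`ℙ(Y ≤ r) = ∑_i ∑_{j ≠ i} [p_i/(1−p_j)] (r − p_j r^{1/p_j}) q_{ij} + ∑_i p_i r^{1/p_i} q_{ii}`. -/
theorem stmt_3
    {Ω : Type*} [MeasurableSpace Ω] (μ : Measure Ω) [IsProbabilityMeasure μ]
    (m : ℕ) (hm : 2 ≤ m) (p : Fin m → ℝ)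
    (hp : ∀ i, 0 < p i) (hpsum : ∑ i, p i = 1)
    (U : Fin m → Ω → ℝ) (hUmeas : ∀ i, Measurable (U i))
    (hUlaw : Measure.map (fun ω i => U i ω) μ
      = Measure.pi fun _ : Fin m => volume.restrict (Set.Ioo (0:ℝ) 1))
    (I : Ω → Fin m) (hImeas : Measurable I)
    (hI : ∀ᵐ ω ∂μ, ∀ j, j ≠ I ω →
      Real.log (U j ω) / p j < Real.log (U (I ω) ω) / p (I ω))
    (q : Fin m → Fin m → ℝ) (hq0 : ∀ i j, 0 ≤ q i j) (hq1 : ∀ i, ∑ j, q i j = 1)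
    (W : Ω → Fin m) (hWmeas : Measurable W)
    (hW : ∀ (j : Fin m) (A : Set (Fin m → ℝ)), MeasurableSet A →
      μ ({ω | W ω = j} ∩ (fun ω i => U i ω) ⁻¹' A)
        = ∫⁻ ω in (fun ω i => U i ω) ⁻¹' A, ENNReal.ofReal (q (I ω) j) ∂μ) :
    ∀ r ∈ Set.Icc (0:ℝ) 1,
      μ {ω | U (W ω) ω ≤ r}
        = ENNReal.ofReal
            (∑ i, ∑ j ∈ Finset.univ \ {i},
                p i / (1 - p j) * (r - p j * r ^ (1 / p j)) * q i j
              + ∑ i, p i * r ^ (1 / p i) * q i i) :=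
  stmt_3_general μ m hm p hp hpsum U hUmeas hUlaw I hImeas hI q hq0 W hWmeas hW
end

section
/- In the partial-inheritance Gumbel-max model, if in addition q_{ii} ≥ θ for all i, where θ ∈ (1/2, 1), then the pivotal statistic Y = U_W satisfies ℙ(Y ≤ r) ≤ r for every r ∈ [0,1]; that is, Y stochastically dominates a Uniform(0,1) random variable. -/
/-!
Write `V = (U_1, …, U_m)`, uniform on `(0,1)^m`. Since `W` is drawn from row `I` of `Q`,
`ℙ(U_W ≤ r) = ∑_{i,j} q_{ij} ℙ(I = i, U_j ≤ r)`. On `(0,1)^m` the event `I = i` is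
`{U_k < U_i ^ (p_k / p_i) for all k ≠ i}`, so slicing along `U_i` gives
`ℙ(I = i, U_i ≤ r) ≤ p_i r^{1/p_i}` and, for `j ≠ i` (split the slice at
`U_i = r^{p_i/p_j}`), `ℙ(I = i, U_j ≤ r) ≤ p_i (r - p_j r^{1/p_j}) / (1 - p_j)`.
With `e_i = p_i (r - r^{1/p_i}) ≥ 0`, `q_{ii} ≥ θ` and `q_{ij} ≤ 1 - θ` for `j ≠ i`,
the weighted sum is at most `r - (2θ - 1) ∑ e_i ≤ r`.
-/

open MeasureTheory ProbabilityTheory Filter Set ENNReal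

noncomputable abbrev uniformCube (ι : Type*) [Fintype ι] : Measure (ι → ℝ) :=
  Measure.pi fun _ : ι => volume.restrict (Ioo (0:ℝ) 1)

lemma volume_restrict_Ioo_Iic_le (c : ℝ) :
    volume.restrict (Ioo (0:ℝ) 1) (Iic c) ≤ ENNReal.ofReal c := by
  rw [Measure.restrict_apply measurableSet_Iic]
  calc volume (Iic c ∩ Ioo 0 1) ≤ volume (Ioc 0 c) :=
        measure_mono fun x hx => ⟨hx.2.1, hx.1⟩
    _ = ENNReal.ofReal c := by rw [Real.volume_Ioc, sub_zero]

instance : IsProbabilityMeasure (volume.restrict (Ioo (0:ℝ) 1)) :=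
  ⟨by simp [Real.volume_Ioo]⟩

lemma ae_uniformCube_mem_Ioo (ι : Type*) [Fintype ι] :
    ∀ᵐ u ∂uniformCube ι, ∀ k, u k ∈ Ioo (0:ℝ) 1 :=
  ae_all_iff.2 fun _ => Measure.tendsto_eval_ae_ae.eventually (ae_restrict_mem measurableSet_Ioo)

lemma uniformCube_slice_le {n : ℕ} (i : Fin (n + 1)) {S : Set ℝ} (hS : MeasurableSet S)
    (h : ℝ → Fin (n + 1) → ℝ) (hh : ∀ k, Measurable fun x => h x k) :
    uniformCube (Fin (n + 1)) {u | u i ∈ S ∧ ∀ k ≠ i, u k ≤ h (u i) k}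
      ≤ ∫⁻ x in S, ∏ k ∈ {i}ᶜ, ENNReal.ofReal (h x k) := by
  set e := MeasurableEquiv.piFinSuccAbove (fun _ : Fin (n + 1) => ℝ) i
  set s : Set (ℝ × (Fin n → ℝ)) := {y | y.1 ∈ S ∧ ∀ t, y.2 t ≤ h y.1 (i.succAbove t)}
  have hs : MeasurableSet s := by
    simp only [s, ofPred_and, ofPred_forall]
    exact (measurable_fst hS).inter
      (.iInter fun t => measurableSet_le (by fun_prop) ((hh _).comp measurable_fst))
  have hpre :
      {u : Fin (n + 1) → ℝ | u i ∈ S ∧ ∀ k ≠ i, u k ≤ h (u i) k} = e ⁻¹' s := by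
    ext u
    simp only [mem_preimage, s, mem_ofPred_eq, e, MeasurableEquiv.piFinSuccAbove_apply]
    refine and_congr_right fun _ => ⟨fun hu t => hu _ (Fin.succAbove_ne i t), fun hu k hk => ?_⟩
    obtain ⟨t, rfl⟩ := Fin.exists_succAbove_eq hk
    exact hu t
  have hslice : ∀ x, (Measure.pi fun _ : Fin n => volume.restrict (Ioo (0:ℝ) 1))
      (Prod.mk x ⁻¹' s) ≤ S.indicator (fun x => ∏ k ∈ {i}ᶜ, ENNReal.ofReal (h x k)) x := by
    intro x
    by_cases hx : x ∈ S
    · have : Prod.mk x ⁻¹' s = univ.pi fun t => Iic (h x (i.succAbove t)) := by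
        ext v; simp [s, hx, Pi.le_def]
      rw [this, Measure.pi_pi, indicator_of_mem hx, ← Fin.image_succAbove_univ,
        Finset.prod_image fun _ _ _ _ h => Fin.succAbove_right_injective h]
      exact Finset.prod_le_prod' fun t _ => volume_restrict_Ioo_Iic_le _
    · have : Prod.mk x ⁻¹' s = ∅ := by ext v; simp [s, hx]
      simp [this]
  rw [hpre, (measurePreserving_piFinSuccAbove _ i).measure_preimage hs.nullMeasurableSet,
    Measure.prod_apply hs]
  calc _ ≤ ∫⁻ x, S.indicator (fun x => ∏ k ∈ {i}ᶜ, ENNReal.ofReal (h x k)) x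
          ∂volume.restrict (Ioo 0 1) := lintegral_mono hslice
    _ ≤ _ := by
      rw [lintegral_indicator hS]
      exact lintegral_mono' (Measure.restrict_mono subset_rfl Measure.restrict_le_self) le_rfl

lemma lintegral_rpow_Ioc {s t c : ℝ} (hs : 0 ≤ s) (hst : s ≤ t) (hc : -1 < c) :
    ∫⁻ x in Ioc s t, ENNReal.ofReal (x ^ c)
      = ENNReal.ofReal ((t ^ (c + 1) - s ^ (c + 1)) / (c + 1)) := by
  have hint : IntegrableOn (fun x : ℝ => x ^ c) (Ioc s t) := by
    rw [← intervalIntegrable_iff_integrableOn_Ioc_of_le hst]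
    exact intervalIntegral.intervalIntegrable_rpow' hc
  rw [← ofReal_integral_eq_lintegral_ofReal hint, ← intervalIntegral.integral_of_le hst,
    integral_rpow (.inl hc)]
  filter_upwards [ae_restrict_mem measurableSet_Ioc] with x hx
  exact Real.rpow_nonneg (hs.trans hx.1.le) c

lemma prod_ofReal_rpow {ι : Type*} (s : Finset ι) {x : ℝ} (hx : 0 < x) (a : ι → ℝ) :
    ∏ k ∈ s, ENNReal.ofReal (x ^ a k) = ENNReal.ofReal (x ^ ∑ k ∈ s, a k) := by
  rw [Real.rpow_sum_of_pos hx,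
    ENNReal.ofReal_prod_of_nonneg fun k _ => (Real.rpow_pos_of_pos hx _).le]

lemma uniformCube_le_of_le_mul_rpow {n : ℕ} (i : Fin (n + 1)) (c a : Fin (n + 1) → ℝ)
    (hc : ∀ k, 0 ≤ c k) (ha : -1 < ∑ k ∈ {i}ᶜ, a k) {s t : ℝ} (hs : 0 ≤ s) (hst : s ≤ t) :
    uniformCube (Fin (n + 1)) {u | u i ∈ Ioc s t ∧ ∀ k ≠ i, u k ≤ c k * u i ^ a k}
      ≤ ENNReal.ofReal ((∏ k ∈ {i}ᶜ, c k) * ((t ^ (∑ k ∈ {i}ᶜ, a k + 1)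
          - s ^ (∑ k ∈ {i}ᶜ, a k + 1)) / (∑ k ∈ {i}ᶜ, a k + 1))) := by
  refine (uniformCube_slice_le i measurableSet_Ioc (fun x k => c k * x ^ a k)
    fun k => by fun_prop).trans (le_of_eq ?_)
  have hprod : ∀ x ∈ Ioc s t, ∏ k ∈ {i}ᶜ, ENNReal.ofReal (c k * x ^ a k)
      = ENNReal.ofReal (∏ k ∈ {i}ᶜ, c k) * ENNReal.ofReal (x ^ ∑ k ∈ {i}ᶜ, a k) := by
    intro x hx
    have hx0 : 0 < x := hs.trans_lt hx.1
    simp_rw [ENNReal.ofReal_mul (hc _), Finset.prod_mul_distrib, prod_ofReal_rpow _ hx0,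
      ENNReal.ofReal_prod_of_nonneg fun k _ => hc k]
  rw [setLIntegral_congr_fun measurableSet_Ioc hprod, lintegral_const_mul' _ _ ofReal_ne_top,
    lintegral_rpow_Ioc hs hst ha, ← ENNReal.ofReal_mul (Finset.prod_nonneg fun k _ => hc k)]

lemma add_le_one_of_ne {ι : Type*} [Fintype ι] {f : ι → ℝ} (hf : ∀ k, 0 ≤ f k)
    (hsum : ∑ k, f k = 1) {i j : ι} (hij : i ≠ j) : f i + f j ≤ 1 := by
  classical
  rw [← Finset.sum_pair hij, ← hsum]
  exact Finset.sum_le_univ_sum_of_nonneg hf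

lemma le_one_of_sum_eq_one {ι : Type*} [Fintype ι] {p : ι → ℝ} (hp : ∀ k, 0 ≤ p k)
    (hpsum : ∑ k, p k = 1) (k : ι) : p k ≤ 1 :=
  hpsum ▸ Finset.single_le_sum (fun k _ => hp k) (Finset.mem_univ k)

lemma sum_compl_div_add_one {ι : Type*} [Fintype ι] [DecidableEq ι] {p : ι → ℝ}
    (hpsum : ∑ k, p k = 1) {i : ι} (hpi : p i ≠ 0) :
    ∑ k ∈ {i}ᶜ, p k / p i + 1 = 1 / p i := by
  have h : ∑ k ∈ {i}ᶜ, p k + p i = 1 := by simpa [hpsum] using Finset.sum_compl_add_sum {i} p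
  rw [← Finset.sum_div, div_add_one hpi, h]

lemma rpow_one_div_le_self {r a : ℝ} (hr0 : 0 ≤ r) (hr1 : r ≤ 1) (ha0 : 0 < a)
    (ha1 : a ≤ 1) : r ^ (1 / a) ≤ r :=
  Real.rpow_le_self_of_le_one hr0 hr1 (one_le_one_div ha0 ha1)

def gumbelRegion {ι : Type*} (p : ι → ℝ) (i : ι) : Set (ι → ℝ) :=
  {u | ∀ k ≠ i, Real.log (u k) / p k < Real.log (u i) / p i}

lemma measurableSet_gumbelRegion {ι : Type*} [Countable ι] (p : ι → ℝ) (i : ι) :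
    MeasurableSet (gumbelRegion p i) := by
  simp only [gumbelRegion, ofPred_forall]
  exact .iInter fun k => .iInter fun _ => measurableSet_lt (by fun_prop) (by fun_prop)

lemma le_rpow_of_mem_gumbelRegion {ι : Type*} {p : ι → ℝ} (hp : ∀ k, 0 < p k)
    {u : ι → ℝ} (hu : ∀ k, 0 < u k) {i : ι} (h : u ∈ gumbelRegion p i) {k : ι}
    (hk : k ≠ i) : u k ≤ u i ^ (p k / p i) := by
  refine ((Real.lt_rpow_iff_log_lt (hu k) (hu i)).2 ?_).le
  have := (div_lt_iff₀ (hp k)).1 (h k hk)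
  linarith [show Real.log (u i) / p i * p k = p k / p i * Real.log (u i) by ring]

lemma uniformCube_cone_le {n : ℕ} {p : Fin (n + 1) → ℝ} (hp : ∀ k, 0 < p k)
    (hpsum : ∑ k, p k = 1) (i : Fin (n + 1)) {t : ℝ} (ht : 0 ≤ t) :
    uniformCube (Fin (n + 1)) {u | u i ∈ Ioc 0 t ∧ ∀ k ≠ i, u k ≤ u i ^ (p k / p i)}
      ≤ ENNReal.ofReal (p i * t ^ (1 / p i)) := by
  have hexp := sum_compl_div_add_one hpsum (hp i).ne'
  have h := uniformCube_le_of_le_mul_rpow i 1 (fun k => p k / p i) (fun _ => zero_le_one)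
    (by linarith [one_div_pos.2 (hp i)]) le_rfl ht
  simp only [Pi.one_apply, one_mul, Finset.prod_const_one, hexp] at h
  refine h.trans_eq (congrArg ENNReal.ofReal ?_)
  rw [Real.zero_rpow (one_div_pos.2 (hp i)).ne', sub_zero, div_div_eq_mul_div, div_one, mul_comm]

lemma uniformCube_gumbelRegion_inter_le_self {n : ℕ} {p : Fin (n + 1) → ℝ}
    (hp : ∀ k, 0 < p k) (hpsum : ∑ k, p k = 1) (i : Fin (n + 1)) {r : ℝ} (hr : 0 ≤ r) :
    uniformCube (Fin (n + 1)) (gumbelRegion p i ∩ {u | u i ≤ r})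
      ≤ ENNReal.ofReal (p i * r ^ (1 / p i)) := by
  refine (measure_mono_ae ?_).trans (uniformCube_cone_le hp hpsum i hr)
  filter_upwards [ae_uniformCube_mem_Ioo _] with u hu ⟨hreg, hur⟩
  exact ⟨⟨(hu i).1, hur⟩,
    fun k hk => le_rpow_of_mem_gumbelRegion hp (fun k => (hu k).1) hreg hk⟩

lemma uniformCube_strip_le {n : ℕ} {p : Fin (n + 1) → ℝ} (hp : ∀ k, 0 < p k)
    (hpsum : ∑ k, p k = 1) {i j : Fin (n + 1)} (hij : j ≠ i) {r s t : ℝ} (hr : 0 ≤ r)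
    (hs : 0 ≤ s) (hst : s ≤ t) :
    uniformCube (Fin (n + 1))
        {u | u i ∈ Ioc s t ∧ u j ≤ r ∧ ∀ k ≠ i, k ≠ j → u k ≤ u i ^ (p k / p i)}
      ≤ ENNReal.ofReal (r * ((t ^ ((1 - p j) / p i) - s ^ ((1 - p j) / p i))
          / ((1 - p j) / p i))) := by
  classical
  have hpi := hp i
  set c : Fin (n + 1) → ℝ := Function.update 1 j r
  set a : Fin (n + 1) → ℝ := Function.update (fun k => p k / p i) j 0
  have hj : j ∈ ({i}ᶜ : Finset (Fin (n + 1))) := by simpa using hij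
  have hc : ∏ k ∈ {i}ᶜ, c k = r := by simp [c, Finset.prod_update_of_mem hj]
  have ha : ∑ k ∈ {i}ᶜ, a k + 1 = (1 - p j) / p i := by
    have hsplit := Finset.sum_sdiff (f := fun k => p k / p i) (Finset.singleton_subset_iff.2 hj)
    rw [Finset.sum_update_of_mem hj, zero_add]
    rw [Finset.sum_singleton] at hsplit
    have := sum_compl_div_add_one hpsum hpi.ne'
    field_simp at this hsplit ⊢
    linarith
  have hE : 0 < (1 - p j) / p i :=
    div_pos (by linarith [add_le_one_of_ne (fun k => (hp k).le) hpsum hij]) hpi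
  have hsub : {u | u i ∈ Ioc s t ∧ u j ≤ r ∧ ∀ k ≠ i, k ≠ j → u k ≤ u i ^ (p k / p i)}
      ⊆ {u : Fin (n + 1) → ℝ | u i ∈ Ioc s t ∧ ∀ k ≠ i, u k ≤ c k * u i ^ a k} := by
    rintro u ⟨hui, huj, hu⟩
    refine ⟨hui, fun k hk => ?_⟩
    rcases eq_or_ne k j with rfl | hkj
    · simpa [c, a] using huj
    · simpa [c, a, hkj] using hu k hk hkj
  have h := uniformCube_le_of_le_mul_rpow i c a
    (fun k => by by_cases hk : k = j <;> simp [c, hk, hr]) (by linarith) hs hst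
  rw [hc, ha] at h
  exact (measure_mono hsub).trans h

lemma uniformCube_gumbelRegion_inter_le_of_ne {n : ℕ} {p : Fin (n + 1) → ℝ}
    (hp : ∀ k, 0 < p k) (hpsum : ∑ k, p k = 1) {i j : Fin (n + 1)} (hij : j ≠ i)
    {r : ℝ} (hr0 : 0 ≤ r) (hr1 : r ≤ 1) :
    uniformCube (Fin (n + 1)) (gumbelRegion p i ∩ {u | u j ≤ r})
      ≤ ENNReal.ofReal (p i * (r - p j * r ^ (1 / p j)) / (1 - p j)) := by
  have hpi := hp i
  have hpj := hp j
  have hpj1 : p j < 1 := by linarith [add_le_one_of_ne (fun k => (hp k).le) hpsum hij]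
  -- Below `t`, the constraint `u j ≤ r` is implied by `u j ≤ u i ^ (p j / p i)`.
  set t := r ^ (p i / p j)
  have ht0 : 0 ≤ t := Real.rpow_nonneg hr0 _
  have ht1 : t ≤ 1 := Real.rpow_le_one hr0 hr1 (div_pos hpi hpj).le
  have hsub : (gumbelRegion p i ∩ {u | u j ≤ r} : Set (Fin (n + 1) → ℝ))
      ≤ᵐ[uniformCube (Fin (n + 1))]
      ({u | u i ∈ Ioc 0 t ∧ ∀ k ≠ i, u k ≤ u i ^ (p k / p i)} ∪
        {u | u i ∈ Ioc t 1 ∧ u j ≤ r ∧ ∀ k ≠ i, k ≠ j → u k ≤ u i ^ (p k / p i)} :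
          Set (Fin (n + 1) → ℝ)) := by
    filter_upwards [ae_uniformCube_mem_Ioo _] with u hu ⟨hreg, hur⟩
    have hpow := fun k (hk : k ≠ i) => le_rpow_of_mem_gumbelRegion hp (fun k => (hu k).1) hreg hk
    rcases le_or_gt (u i) t with hut | hut
    · exact Or.inl ⟨⟨(hu i).1, hut⟩, hpow⟩
    · exact Or.inr ⟨⟨hut, (hu i).2.le⟩, hur, fun k hk _ => hpow k hk⟩
  have hE : 0 < (1 - p j) / p i := div_pos (by linarith) hpi
  have hpow1 : t ^ (1 / p i) = r ^ (1 / p j) := by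
    rw [← Real.rpow_mul hr0]; congr 1; field_simp
  have hpow2 : r * t ^ ((1 - p j) / p i) = r ^ (1 / p j) := by
    rw [← Real.rpow_mul hr0, ← Real.rpow_one_add' hr0 (by positivity)]
    congr 1
    field_simp
    ring
  calc _ ≤ _ := measure_mono_ae hsub
    _ ≤ _ := measure_union_le _ _
    _ ≤ _ := add_le_add (uniformCube_cone_le hp hpsum i ht0)
        (uniformCube_strip_le hp hpsum hij hr0 ht0 ht1)
    _ = ENNReal.ofReal (p i * (r - p j * r ^ (1 / p j)) / (1 - p j)) := by
      rw [Real.one_rpow, ← ENNReal.ofReal_add (by positivity) (mul_nonneg hr0 (div_nonneg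
        (sub_nonneg.2 (Real.rpow_le_one ht0 ht1 hE.le)) hE.le)), hpow1]
      congr 1
      rw [mul_div_assoc', mul_sub, mul_one, hpow2]
      have : 1 - p j ≠ 0 := (sub_pos.2 hpj1).ne'
      field_simp
      ring

/-- The exact value of `ℙ(I = i, U j ≤ r)` under the Gumbel-max rule with weights `p`. -/
noncomputable def gumbelJointCdf {ι : Type*} [DecidableEq ι] (p : ι → ℝ) (r : ℝ) (i j : ι) : ℝ :=
  if j = i then p i * r ^ (1 / p i) else p i * (r - p j * r ^ (1 / p j)) / (1 - p j)

lemma uniformCube_gumbelRegion_inter_le {n : ℕ} {p : Fin (n + 1) → ℝ}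
    (hp : ∀ k, 0 < p k) (hpsum : ∑ k, p k = 1) (i j : Fin (n + 1))
    {r : ℝ} (hr0 : 0 ≤ r) (hr1 : r ≤ 1) :
    uniformCube (Fin (n + 1)) (gumbelRegion p i ∩ {u | u j ≤ r})
      ≤ ENNReal.ofReal (gumbelJointCdf p r i j) := by
  unfold gumbelJointCdf
  split_ifs with hji
  · subst hji
    exact uniformCube_gumbelRegion_inter_le_self hp hpsum j hr0
  · exact uniformCube_gumbelRegion_inter_le_of_ne hp hpsum hji hr0 hr1

lemma gumbelJointCdf_nonneg {ι : Type*} [Fintype ι] [DecidableEq ι] {p : ι → ℝ} {r : ℝ}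
    (hp : ∀ k, 0 < p k) (hpsum : ∑ k, p k = 1) (hr0 : 0 ≤ r) (hr1 : r ≤ 1)
    (i j : ι) : 0 ≤ gumbelJointCdf p r i j := by
  have hp1 := le_one_of_sum_eq_one (fun k => (hp k).le) hpsum
  unfold gumbelJointCdf
  split_ifs
  · exact mul_nonneg (hp i).le (Real.rpow_nonneg hr0 _)
  · refine div_nonneg (mul_nonneg (hp i).le ?_) (sub_nonneg.2 (hp1 j))
    linarith [rpow_one_div_le_self hr0 hr1 (hp j) (hp1 j),
      mul_le_of_le_one_left (Real.rpow_nonneg hr0 (1 / p j)) (hp1 j)]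

lemma sum_sum_mul_gumbelJointCdf_le {ι : Type*} [Fintype ι] [DecidableEq ι] {p : ι → ℝ}
    {r : ℝ} (hp : ∀ k, 0 < p k) (hpsum : ∑ k, p k = 1)
    {q : ι → ι → ℝ} (hq0 : ∀ i j, 0 ≤ q i j) (hq1 : ∀ i, ∑ j, q i j = 1)
    {θ : ℝ} (hθ : 1 / 2 ≤ θ) (hqdiag : ∀ i, θ ≤ q i i) (hr0 : 0 ≤ r) (hr1 : r ≤ 1) :
    ∑ i, ∑ j, q i j * gumbelJointCdf p r i j ≤ r := by
  have hp1 := le_one_of_sum_eq_one (fun k => (hp k).le) hpsum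
  -- `e k` is the amount by which the diagonal term falls short of `p k * r`.
  set e : ι → ℝ := fun k => p k * (r - r ^ (1 / p k))
  have he : ∀ k, 0 ≤ e k := fun k =>
    mul_nonneg (hp k).le (sub_nonneg.2 (rpow_one_div_le_self hr0 hr1 (hp k) (hp1 k)))
  set d : ι → ℝ := fun k => e k / (1 - p k)
  have hd : ∀ k, 0 ≤ d k := fun k => div_nonneg (he k) (sub_nonneg.2 (hp1 k))
  have hde : ∀ k, (1 - p k) * d k = e k := by
    intro k
    rcases eq_or_ne (1 - p k) 0 with h | h
    · have : p k = 1 := by linarith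
      simp [d, e, this]
    · exact mul_div_cancel₀ _ h
  have hterm : ∀ i j, q i j * gumbelJointCdf p r i j
      ≤ q i j * (p i * r) + (1 - θ) * (p i * d j)
        - if j = i then θ * e i + (1 - θ) * (p i * d i) else 0 := by
    intro i j
    rcases eq_or_ne j i with rfl | hji
    · simp only [gumbelJointCdf, if_true]
      nlinarith [hqdiag j, he j]
    · have hpj : 1 - p j ≠ 0 := by
        linarith [add_le_one_of_ne (fun k => (hp k).le) hpsum hji, hp i]
      have hq : q i j ≤ 1 - θ := by
        linarith [add_le_one_of_ne (hq0 i) (hq1 i) hji.symm, hqdiag i]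
      have hval : gumbelJointCdf p r i j = p i * r + p i * d j := by
        simp only [gumbelJointCdf, if_neg hji, d, e]
        field_simp
        ring
      rw [hval, if_neg hji, sub_zero]
      nlinarith [mul_nonneg (hp i).le (hd j)]
  calc _ ≤ ∑ i, ∑ j, (q i j * (p i * r) + (1 - θ) * (p i * d j)
          - if j = i then θ * e i + (1 - θ) * (p i * d i) else 0) :=
        Finset.sum_le_sum fun i _ => Finset.sum_le_sum fun j _ => hterm i j
    _ = r - (2 * θ - 1) * ∑ k, e k := by
      simp only [Finset.sum_sub_distrib, Finset.sum_add_distrib, Finset.sum_ite_eq',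
        Finset.mem_univ, if_true, ← Finset.mul_sum, ← Finset.sum_mul, hq1]
      have hsum : ∑ k, d k - ∑ k, p k * d k = ∑ k, e k := by
        rw [← Finset.sum_sub_distrib]
        exact Finset.sum_congr rfl fun k _ => by rw [← hde k]; ring
      rw [hpsum]
      linear_combination (1 - θ) * hsum
    _ ≤ r := by nlinarith [Finset.sum_nonneg fun k (_ : k ∈ Finset.univ) => he k]

lemma setLIntegral_comp_eq_sum {Ω α : Type*} [MeasurableSpace Ω] {μ : Measure Ω} [Fintype α]
    [MeasurableSpace α] [MeasurableSingletonClass α] {f : Ω → α} (hf : Measurable f)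
    (g : α → ℝ≥0∞) (s : Set Ω) :
    ∫⁻ ω in s, g (f ω) ∂μ = ∑ a, g a * μ ({ω | f ω = a} ∩ s) := by
  rw [← lintegral_map (measurable_of_finite g) hf, lintegral_fintype]
  refine Finset.sum_congr rfl fun a _ => ?_
  rw [Measure.map_apply hf (measurableSet_singleton a),
    Measure.restrict_apply (hf (measurableSet_singleton a))]
  rfl

lemma measure_pivotal_le_le_sum {Ω ι : Type*} [MeasurableSpace Ω] {μ : Measure Ω} [Fintype ι]
    [MeasurableSpace ι] [MeasurableSingletonClass ι] {V : Ω → ι → ℝ} {I W : Ω → ι}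
    (hI : Measurable I) {q : ι → ι → ℝ}
    (hW : ∀ j (A : Set (ι → ℝ)), MeasurableSet A →
      μ ({ω | W ω = j} ∩ V ⁻¹' A)
        = ∫⁻ ω in V ⁻¹' A, ENNReal.ofReal (q (I ω) j) ∂μ) (r : ℝ) :
    μ {ω | V ω (W ω) ≤ r}
      ≤ ∑ j, ∑ i, ENNReal.ofReal (q i j)
          * μ ({ω | I ω = i} ∩ V ⁻¹' {u | u j ≤ r}) := by
  have hcover : {ω | V ω (W ω) ≤ r} ⊆ ⋃ j, {ω | W ω = j} ∩ V ⁻¹' {u | u j ≤ r} :=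
    fun ω h => mem_iUnion.2 ⟨W ω, rfl, h⟩
  refine (measure_mono hcover).trans ((measure_iUnion_fintype_le _ _).trans_eq ?_)
  refine Finset.sum_congr rfl fun j _ => ?_
  rw [hW _ _ (measurableSet_le (measurable_pi_apply j) measurable_const)]
  exact setLIntegral_comp_eq_sum hI (fun i => ENNReal.ofReal (q i j)) _

lemma measure_argmax_eq_inter_le_gumbelJointCdf {Ω : Type*} [MeasurableSpace Ω]
    {μ : Measure Ω} {n : ℕ} {p : Fin (n + 1) → ℝ} (hp : ∀ k, 0 < p k) (hpsum : ∑ k, p k = 1)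
    {V : Ω → Fin (n + 1) → ℝ} (hV : μ.map V = uniformCube (Fin (n + 1)))
    {I : Ω → Fin (n + 1)} (hI : ∀ᵐ ω ∂μ, V ω ∈ gumbelRegion p (I ω))
    (i j : Fin (n + 1)) {r : ℝ} (hr0 : 0 ≤ r) (hr1 : r ≤ 1) :
    μ ({ω | I ω = i} ∩ V ⁻¹' {u | u j ≤ r})
      ≤ ENNReal.ofReal (gumbelJointCdf p r i j) := by
  have hVm : AEMeasurable V μ := .of_map_ne_zero (by rw [hV]; exact IsProbabilityMeasure.ne_zero _)
  calc _ ≤ μ (V ⁻¹' (gumbelRegion p i ∩ {u | u j ≤ r})) := by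
        refine measure_mono_ae ?_
        filter_upwards [hI] with ω hω ⟨hi, hj⟩
        exact ⟨hi ▸ hω, hj⟩
    _ = uniformCube (Fin (n + 1)) (gumbelRegion p i ∩ {u | u j ≤ r}) := by
        rw [← Measure.map_apply_of_aemeasurable hVm ((measurableSet_gumbelRegion p i).inter
          (measurableSet_le (measurable_pi_apply j) measurable_const)), hV]
    _ ≤ _ := uniformCube_gumbelRegion_inter_le hp hpsum i j hr0 hr1

theorem stmt_4_general
    {Ω : Type*} [MeasurableSpace Ω] (μ : Measure Ω)
    (m : ℕ) (p : Fin m → ℝ)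
    (hp : ∀ i, 0 < p i) (hpsum : ∑ i, p i = 1)
    (U : Fin m → Ω → ℝ)
    (hUlaw : Measure.map (fun ω i => U i ω) μ
      = Measure.pi fun _ : Fin m => volume.restrict (Set.Ioo (0:ℝ) 1))
    (I : Ω → Fin m) (hImeas : Measurable I)
    (hI : ∀ᵐ ω ∂μ, ∀ j, j ≠ I ω →
      Real.log (U j ω) / p j < Real.log (U (I ω) ω) / p (I ω))
    (q : Fin m → Fin m → ℝ) (hq0 : ∀ i j, 0 ≤ q i j) (hq1 : ∀ i, ∑ j, q i j = 1)
    (θ : ℝ) (hθ : θ ∈ Set.Ioo (1/2 : ℝ) 1) (hqdiag : ∀ i, θ ≤ q i i)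
    (W : Ω → Fin m)
    (hW : ∀ (j : Fin m) (A : Set (Fin m → ℝ)), MeasurableSet A →
      μ ({ω | W ω = j} ∩ (fun ω i => U i ω) ⁻¹' A)
        = ∫⁻ ω in (fun ω i => U i ω) ⁻¹' A, ENNReal.ofReal (q (I ω) j) ∂μ) :
    ∀ r ∈ Set.Icc (0:ℝ) 1, μ {ω | U (W ω) ω ≤ r} ≤ ENNReal.ofReal r := by
  intro r ⟨hr0, hr1⟩
  obtain ⟨n, rfl⟩ : ∃ n, m = n + 1 :=
    Nat.exists_eq_succ_of_ne_zero (by rintro rfl; simp at hpsum)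
  have hb i j := mul_nonneg (hq0 i j) (gumbelJointCdf_nonneg hp hpsum hr0 hr1 i j)
  calc μ {ω | U (W ω) ω ≤ r}
      ≤ ∑ j, ∑ i, ENNReal.ofReal (q i j)
          * μ ({ω | I ω = i} ∩ (fun ω i => U i ω) ⁻¹' {u | u j ≤ r}) :=
        measure_pivotal_le_le_sum hImeas hW r
    _ ≤ ∑ j, ∑ i, ENNReal.ofReal (q i j * gumbelJointCdf p r i j) := by
        gcongr with j _ i _
        rw [ENNReal.ofReal_mul (hq0 i j)]
        exact mul_le_mul_right
          (measure_argmax_eq_inter_le_gumbelJointCdf hp hpsum hUlaw hI i j hr0 hr1) _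
    _ = ENNReal.ofReal (∑ i, ∑ j, q i j * gumbelJointCdf p r i j) := by
        rw [Finset.sum_comm, ENNReal.ofReal_sum_of_nonneg fun i _ =>
          Finset.sum_nonneg fun j _ => hb i j]
        simp_rw [ENNReal.ofReal_sum_of_nonneg fun j _ => hb _ j]
    _ ≤ ENNReal.ofReal r := ENNReal.ofReal_le_ofReal
        (sum_sum_mul_gumbelJointCdf_le hp hpsum hq0 hq1 hθ.1.le hqdiag hr0 hr1)

/-- In the partial-inheritance Gumbel-max model, if in addition
`q_{ii} ≥ θ` for all `i`, with `θ ∈ (1/2, 1)`, then the pivotal statistic `Y = U_W`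
satisfies `ℙ(Y ≤ r) ≤ r` for every `r ∈ [0,1]`, i.e. `Y` stochastically dominates a
`Uniform(0,1)` random variable. -/
theorem stmt_4
    {Ω : Type*} [MeasurableSpace Ω] (μ : Measure Ω) [IsProbabilityMeasure μ]
    (m : ℕ) (hm : 2 ≤ m) (p : Fin m → ℝ)
    (hp : ∀ i, 0 < p i) (hpsum : ∑ i, p i = 1)
    (U : Fin m → Ω → ℝ) (hUmeas : ∀ i, Measurable (U i))
    (hUlaw : Measure.map (fun ω i => U i ω) μ
      = Measure.pi fun _ : Fin m => volume.restrict (Set.Ioo (0:ℝ) 1))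
    (I : Ω → Fin m) (hImeas : Measurable I)
    (hI : ∀ᵐ ω ∂μ, ∀ j, j ≠ I ω →
      Real.log (U j ω) / p j < Real.log (U (I ω) ω) / p (I ω))
    (q : Fin m → Fin m → ℝ) (hq0 : ∀ i j, 0 ≤ q i j) (hq1 : ∀ i, ∑ j, q i j = 1)
    (θ : ℝ) (hθ : θ ∈ Set.Ioo (1/2 : ℝ) 1) (hqdiag : ∀ i, θ ≤ q i i)
    (W : Ω → Fin m) (hWmeas : Measurable W)
    (hW : ∀ (j : Fin m) (A : Set (Fin m → ℝ)), MeasurableSet A →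
      μ ({ω | W ω = j} ∩ (fun ω i => U i ω) ⁻¹' A)
        = ∫⁻ ω in (fun ω i => U i ω) ⁻¹' A, ENNReal.ofReal (q (I ω) j) ∂μ) :
    ∀ r ∈ Set.Icc (0:ℝ) 1, μ {ω | U (W ω) ω ≤ r} ≤ ENNReal.ofReal r :=
  stmt_4_general μ m p hp hpsum U hUlaw I hImeas hI q hq0 hq1 θ hθ hqdiag W hW
end

section
/- Consider n i.i.d. pairs (W_t, D_t), t = 1,…,n, where under H0 the key D_t is uniform on 𝒟 and W_t is uniform on {1,…,m}, independent of D_t, and under H1 the key D_t is uniform on 𝒟 and, conditionally on D_t, W_t is uniform on D_t. Then every measurable test φ : ({1,…,m} × 𝒟)^n → {0,1} satisfies ℙ_{H0}(φ(W_{1:n}, D_{1:n}) = 1) + ℙ_{H1}(φ(W_{1:n}, D_{1:n}) = 0) ≥ γ^n, and the test that rejects if and only if W_t ∈ D_t for every t ≤ n attains equality; hence the minimal possible sum of type I and type II errors equals γ^n, and the minimal asymptotic sum satisfies inf_φ limsup_{n→∞} (e_{φ,1} + e_{φ,2})^{1/n} = γ. -/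
open MeasureTheory Filter Set ENNReal

/-- Keys of the red-green-list watermark: subsets of `{1,…,m}` of size `g = γm`. -/
def RGKey (m g : ℕ) : Type := {A : Finset (Fin m) // A.card = g}

instance (m g : ℕ) : Fintype (RGKey m g) := by unfold RGKey; infer_instance
instance (m g : ℕ) : DecidableEq (RGKey m g) := by unfold RGKey; infer_instance

/-- Probability of a single outcome `(w, A)` under `H0`: the key `A` is uniform on the
collection of keys and the token `w` is uniform on `{1,…,m}`, independent of the key. -/
noncomputable def rgP0 (m g : ℕ) (_ : Fin m × RGKey m g) : ℝ :=
  ((m : ℝ) * (Fintype.card (RGKey m g) : ℝ))⁻¹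

/-- Probability of a single outcome `(w, A)` under `H1`: the key `A` is uniform on the
collection of keys and, conditionally on the key, the token is uniform on the key. -/
noncomputable def rgP1 (m g : ℕ) (x : Fin m × RGKey m g) : ℝ :=
  (Fintype.card (RGKey m g) : ℝ)⁻¹ * (if x.1 ∈ x.2.1 then (g : ℝ)⁻¹ else 0)

/-- Type I error of the test `φ` on `n` i.i.d. pairs: `ℙ_{H0}(φ = 1)`. -/
noncomputable def rgTypeI (m g n : ℕ) (φ : (Fin n → Fin m × RGKey m g) → Bool) : ℝ :=
  ∑ x : Fin n → Fin m × RGKey m g, (∏ t, rgP0 m g (x t)) * (if φ x then 1 else 0)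

/-- Type II error of the test `φ` on `n` i.i.d. pairs: `ℙ_{H1}(φ = 0)`. -/
noncomputable def rgTypeII (m g n : ℕ) (φ : (Fin n → Fin m × RGKey m g) → Bool) : ℝ :=
  ∑ x : Fin n → Fin m × RGKey m g, (∏ t, rgP1 m g (x t)) * (if φ x then 0 else 1)

/-!
Both error probabilities are sums over `n`-tuples of products of one-letter masses. The
single-letter masses satisfy `P₀ ≤ P₁` on the green set `{(w, A) | w ∈ A}` and `P₁ = 0` off
it, so pointwise `min (P₀^⊗n, P₁^⊗n)` dominates the product of `P₀` restricted to the green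
set; summing over `n`-tuples, any test has error sum at least `P₀(green)^n = γ^n`. The test
accepting `H1` exactly on all-green tuples has type II error `0` and type I error
`P₀(green)^n`. Taking `n`-th roots, every sequence of tests has `limsup ≥ γ` and this one
has `n`-th root identically `γ`.
-/

open Finset

section IidTesting

variable {α : Type*} [Fintype α] {n : ℕ}

noncomputable def iidTypeI (p : α → ℝ) (φ : (Fin n → α) → Bool) : ℝ :=
  ∑ x : Fin n → α, (∏ t, p (x t)) * (if φ x then 1 else 0)

noncomputable def iidTypeII (p : α → ℝ) (φ : (Fin n → α) → Bool) : ℝ :=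
  ∑ x : Fin n → α, (∏ t, p (x t)) * (if φ x then 0 else 1)

theorem sum_prod_mul_le_pow {p : α → ℝ} (hp : ∀ a, 0 ≤ p a) (c : (Fin n → α) → ℝ)
    (hc : ∀ x, c x ≤ 1) :
    ∑ x : Fin n → α, (∏ t, p (x t)) * c x ≤ (∑ a, p a) ^ n := by
  rw [Fintype.sum_pow]
  exact sum_le_sum fun x _ =>
    mul_le_of_le_one_right (prod_nonneg fun t _ => hp (x t)) (hc x)

theorem iidTypeI_add_iidTypeII_le {p₀ p₁ : α → ℝ} (hp₀ : ∀ a, 0 ≤ p₀ a) (hp₁ : ∀ a, 0 ≤ p₁ a)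
    (φ : (Fin n → α) → Bool) :
    iidTypeI p₀ φ + iidTypeII p₁ φ ≤ (∑ a, p₀ a) ^ n + (∑ a, p₁ a) ^ n := by
  apply add_le_add <;> apply sum_prod_mul_le_pow ‹_› <;> intro x <;> split <;> norm_num

variable {S : α → Prop} [DecidablePred S] {p₀ p₁ : α → ℝ}

theorem pow_sum_ite_le_iidTypeI_add_iidTypeII (hp₀ : ∀ a, 0 ≤ p₀ a) (hp₁ : ∀ a, 0 ≤ p₁ a)
    (hS : ∀ a, S a → p₀ a ≤ p₁ a) (φ : (Fin n → α) → Bool) :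
    (∑ a, if S a then p₀ a else 0) ^ n ≤ iidTypeI p₀ φ + iidTypeII p₁ φ := by
  set q : α → ℝ := fun a => if S a then p₀ a else 0
  have hq : ∀ a, 0 ≤ q a := fun a => by dsimp only [q]; split_ifs; exacts [hp₀ a, le_rfl]
  have hq₀ : ∀ a, q a ≤ p₀ a := fun a => by dsimp only [q]; split_ifs; exacts [le_rfl, hp₀ a]
  have hq₁ : ∀ a, q a ≤ p₁ a := fun a => by
    dsimp only [q]; split_ifs with h; exacts [hS a h, hp₁ a]
  rw [Fintype.sum_pow, iidTypeI, iidTypeII, ← sum_add_distrib]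
  refine sum_le_sum fun x _ => ?_
  cases φ x
  · simpa using prod_le_prod (fun t _ => hq (x t)) fun t _ => hq₁ (x t)
  · simpa using prod_le_prod (fun t _ => hq (x t)) fun t _ => hq₀ (x t)

theorem iidTypeI_forall (p₀ : α → ℝ) :
    iidTypeI p₀ (fun x : Fin n → α => decide (∀ t, S (x t)))
      = (∑ a, if S a then p₀ a else 0) ^ n := by
  simp only [iidTypeI, Fintype.sum_pow, Fintype.prod_ite_zero, decide_eq_true_eq, mul_ite,
    mul_one, mul_zero]
  exact sum_congr rfl fun x _ => by congr

theorem iidTypeII_forall (hp₁ : ∀ a, ¬S a → p₁ a = 0) :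
    iidTypeII p₁ (fun x : Fin n → α => decide (∀ t, S (x t))) = 0 := by
  refine sum_eq_zero fun x _ => ?_
  by_cases h : ∀ t, S (x t)
  · simp [h]
  · obtain ⟨t, ht⟩ := not_forall.1 h
    rw [prod_eq_zero (mem_univ t) (hp₁ _ ht), zero_mul]

end IidTesting

section Asymptotics

variable {u : ℕ → ℝ} {γ B : ℝ}

theorem le_limsup_rpow_inv (hγ : 0 ≤ γ) (hlow : ∀ n, γ ^ n ≤ u n) (hup : ∀ n, u n ≤ B) :
    γ ≤ limsup (fun n : ℕ => u n ^ (n : ℝ)⁻¹) atTop := by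
  have hB : 1 ≤ B := (pow_zero γ ▸ hlow 0).trans (hup 0)
  have hu : ∀ n, 0 ≤ u n := fun n => (pow_nonneg hγ n).trans (hlow n)
  refine le_limsup_of_frequently_le (Eventually.frequently ?_) (isBoundedUnder_of ⟨B, ?_⟩)
  · filter_upwards [eventually_ne_atTop 0] with n hn
    calc γ = (γ ^ n) ^ (n : ℝ)⁻¹ := (Real.pow_rpow_inv_natCast hγ hn).symm
      _ ≤ u n ^ (n : ℝ)⁻¹ := Real.rpow_le_rpow (by positivity) (hlow n) (by positivity)
  · intro n
    calc u n ^ (n : ℝ)⁻¹ ≤ B ^ (n : ℝ)⁻¹ := Real.rpow_le_rpow (hu n) (hup n) (by positivity)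
      _ ≤ B ^ (1 : ℝ) := Real.rpow_le_rpow_of_exponent_le hB (Nat.cast_inv_le_one n)
      _ = B := Real.rpow_one B

theorem limsup_pow_rpow_inv (hγ : 0 ≤ γ) :
    limsup (fun n : ℕ => (γ ^ n) ^ (n : ℝ)⁻¹) atTop = γ := by
  refine (limsup_congr ?_).trans (limsup_const γ)
  filter_upwards [eventually_ne_atTop 0] with n hn
  exact Real.pow_rpow_inv_natCast hγ hn

theorem iInf_limsup_rpow_inv_eq {ι : Type*} {u : ι → ℕ → ℝ} (hγ : 0 ≤ γ)
    (hlow : ∀ i n, γ ^ n ≤ u i n) (hup : ∀ i n, u i n ≤ B) (i₀ : ι)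
    (hi₀ : ∀ n, u i₀ n = γ ^ n) :
    ⨅ i, limsup (fun n : ℕ => u i n ^ (n : ℝ)⁻¹) atTop = γ := by
  have hge : ∀ i, γ ≤ limsup (fun n : ℕ => u i n ^ (n : ℝ)⁻¹) atTop := fun i =>
    le_limsup_rpow_inv hγ (hlow i) (hup i)
  have : Nonempty ι := ⟨i₀⟩
  refine le_antisymm (ciInf_le_of_le ⟨γ, forall_mem_range.2 hge⟩ i₀ ?_) (le_ciInf hge)
  simp only [hi₀, limsup_pow_rpow_inv hγ, le_refl]

end Asymptotics

section RedGreen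

variable {m g : ℕ}

theorem RGKey.le (A : RGKey m g) : g ≤ m := by
  simpa [A.2] using A.1.card_le_univ

theorem RGKey.nonempty_of_le (h : g ≤ m) : Nonempty (RGKey m g) := by
  obtain ⟨B, -, hB⟩ := exists_subset_card_eq (s := (univ : Finset (Fin m))) (by simpa using h)
  exact ⟨⟨B, hB⟩⟩

theorem RGKey.card_pos (h : g ≤ m) : (0 : ℝ) < Fintype.card (RGKey m g) := by
  have := RGKey.nonempty_of_le h
  exact_mod_cast Fintype.card_pos

theorem RGKey.sum_ite_mem (A : RGKey m g) (c : ℝ) :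
    ∑ w : Fin m, (if w ∈ A.1 then c else 0) = g * c := by
  simp [A.2]

theorem rgP0_nonneg (x : Fin m × RGKey m g) : 0 ≤ rgP0 m g x := by
  unfold rgP0; positivity

theorem rgP1_nonneg (x : Fin m × RGKey m g) : 0 ≤ rgP1 m g x := by
  unfold rgP1; split <;> positivity

theorem rgP1_eq_zero {x : Fin m × RGKey m g} (hx : x.1 ∉ x.2.1) : rgP1 m g x = 0 := by
  simp [rgP1, hx]

theorem rgP0_le_rgP1 {x : Fin m × RGKey m g} (hx : x.1 ∈ x.2.1) : rgP0 m g x ≤ rgP1 m g x := by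
  have hg : (0 : ℝ) < g := by
    exact_mod_cast x.2.2 ▸ Finset.card_pos.2 ⟨x.1, hx⟩
  have hgm : (g : ℝ) ≤ m := by exact_mod_cast x.2.le
  have hC := RGKey.card_pos x.2.le
  rw [rgP0, rgP1, if_pos hx, mul_inv, mul_comm]
  exact mul_le_mul_of_nonneg_left (inv_anti₀ hg hgm) (inv_nonneg.2 hC.le)

theorem sum_rgP0 (hg : g ≠ 0) (hgm : g ≤ m) : ∑ x, rgP0 m g x = 1 := by
  have hm : (m : ℝ) ≠ 0 := by exact_mod_cast (Nat.pos_of_ne_zero hg |>.trans_le hgm).ne'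
  have hC := RGKey.card_pos hgm
  simp only [rgP0, sum_const, card_univ, Fintype.card_prod, Fintype.card_fin, nsmul_eq_mul]
  push_cast
  field_simp

theorem sum_rgP1 (hg : g ≠ 0) (hgm : g ≤ m) : ∑ x, rgP1 m g x = 1 := by
  have hC := RGKey.card_pos hgm
  simp only [rgP1, Fintype.sum_prod_type_right, ← mul_sum, RGKey.sum_ite_mem, sum_const,
    card_univ, nsmul_eq_mul]
  field_simp

theorem sum_rgP0_green (hgm : g ≤ m) :
    ∑ x : Fin m × RGKey m g, (if x.1 ∈ x.2.1 then rgP0 m g x else 0) = g / m := by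
  have hC := RGKey.card_pos hgm
  simp only [rgP0, Fintype.sum_prod_type_right, RGKey.sum_ite_mem, sum_const, card_univ,
    nsmul_eq_mul]
  field_simp

theorem iidTypeI_rgP0_add_iidTypeII_rgP1_le_two (hg : g ≠ 0) (hgm : g ≤ m) {n : ℕ}
    (φ : (Fin n → Fin m × RGKey m g) → Bool) :
    iidTypeI (rgP0 m g) φ + iidTypeII (rgP1 m g) φ ≤ 2 := by
  simpa [sum_rgP0 hg hgm, sum_rgP1 hg hgm, one_add_one_eq_two] using
    iidTypeI_add_iidTypeII_le rgP0_nonneg rgP1_nonneg φ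

theorem rgTypeI_eq_iidTypeI (n : ℕ) (φ : (Fin n → Fin m × RGKey m g) → Bool) :
    rgTypeI m g n φ = iidTypeI (rgP0 m g) φ := rfl

theorem rgTypeII_eq_iidTypeII (n : ℕ) (φ : (Fin n → Fin m × RGKey m g) → Bool) :
    rgTypeII m g n φ = iidTypeII (rgP1 m g) φ := rfl

end RedGreen

/-- In the complete-inheritance red-green-list detection model with uniform
next-token-prediction distributions, every test `φ` satisfies
`e_{φ,1} + e_{φ,2} ≥ γ^n`; the test rejecting iff `W_t ∈ D_t` for every `t` attains equality;
hence the minimal possible sum of type I and type II errors equals `γ^n`, and the minimal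
asymptotic sum satisfies `inf_φ limsup (e_{φ,1}+e_{φ,2})^{1/n} = γ`. -/
theorem stmt_8
    (m g : ℕ) (hm : 2 ≤ m) (γ : ℝ) (hγ : γ ∈ Set.Ioo (0:ℝ) 1)
    (hg : (g : ℝ) = γ * m) :
    (∀ (n : ℕ) (φ : (Fin n → Fin m × RGKey m g) → Bool),
        γ ^ n ≤ rgTypeI m g n φ + rgTypeII m g n φ)
    ∧ (∀ n : ℕ,
        rgTypeI m g n (fun x => decide (∀ t, (x t).1 ∈ (x t).2.1))
          + rgTypeII m g n (fun x => decide (∀ t, (x t).1 ∈ (x t).2.1)) = γ ^ n)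
    ∧ (∀ n : ℕ,
        IsLeast {e : ℝ | ∃ φ : (Fin n → Fin m × RGKey m g) → Bool,
          e = rgTypeI m g n φ + rgTypeII m g n φ} (γ ^ n))
    ∧ (⨅ φ : (n : ℕ) → (Fin n → Fin m × RGKey m g) → Bool,
        Filter.limsup
          (fun n : ℕ => (rgTypeI m g n (φ n) + rgTypeII m g n (φ n)) ^ ((n : ℝ)⁻¹))
          atTop) = γ := by
  simp only [rgTypeI_eq_iidTypeI, rgTypeII_eq_iidTypeII]
  obtain ⟨hγ₀, hγ₁⟩ := hγ
  have hg₀ : g ≠ 0 := by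
    have : (0 : ℝ) < g := by rw [hg]; exact mul_pos hγ₀ (by exact_mod_cast (by omega : 0 < m))
    exact_mod_cast this.ne'
  have hgm : g ≤ m := by
    have : (g : ℝ) ≤ m := by rw [hg]; exact mul_le_of_le_one_left (Nat.cast_nonneg m) hγ₁.le
    exact_mod_cast this
  have hgreen : ∑ x : Fin m × RGKey m g, (if x.1 ∈ x.2.1 then rgP0 m g x else 0) = γ := by
    rw [sum_rgP0_green hgm, hg]; field_simp
  have hlow : ∀ n (φ : (Fin n → Fin m × RGKey m g) → Bool),
      γ ^ n ≤ iidTypeI (rgP0 m g) φ + iidTypeII (rgP1 m g) φ := fun n φ =>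
    hgreen ▸ pow_sum_ite_le_iidTypeI_add_iidTypeII rgP0_nonneg rgP1_nonneg
      (fun _ => rgP0_le_rgP1) φ
  have hopt : ∀ n, iidTypeI (rgP0 m g) (fun x : Fin n → _ => decide (∀ t, (x t).1 ∈ (x t).2.1))
      + iidTypeII (rgP1 m g) (fun x : Fin n → _ => decide (∀ t, (x t).1 ∈ (x t).2.1))
      = γ ^ n := fun n => by
    rw [iidTypeI_forall (S := fun x : Fin m × RGKey m g => x.1 ∈ x.2.1),
      iidTypeII_forall fun _ => rgP1_eq_zero, add_zero, hgreen]
  refine ⟨hlow, hopt, fun n => ⟨⟨_, (hopt n).symm⟩, fun e ⟨φ, he⟩ => he ▸ hlow n φ⟩, ?_⟩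
  exact iInf_limsup_rpow_inv_eq hγ₀.le (fun φ n => hlow n (φ n))
    (fun φ n => iidTypeI_rgP0_add_iidTypeII_rgP1_le_two hg₀ hgm (φ n)) _ hopt
end

section
/- Let 0 < γ < θ < 1 and define a = (log(1−γ) − log(1−θ)) / (log θ + log(1−γ) − log γ − log(1−θ)). Then a ∈ (γ, θ) and d(a‖γ) = d(a‖θ). Let ψ_n be the test of X_{1:n} ∈ {0,1}^n that rejects if and only if ∑_{t=1}^n X_t ≥ ⌈na⌉. Then: (i) limsup_{n→∞} [ℙ_{Bernoulli(γ)^{⊗n}}(ψ_n = 1) + sup ℙ(ψ_n = 0)]^{1/n} = e^{−d(a‖γ)}, where the supremum is over all laws of independent X_t ∼ Bernoulli(θ_t) with θ_t ∈ [θ, 1]; and (ii) for every sequence of tests φ_n : {0,1}^n → {0,1}, limsup_{n→∞} [ℙ_{Bernoulli(γ)^{⊗n}}(φ_n = 1) + ℙ_{Bernoulli(θ)^{⊗n}}(φ_n = 0)]^{1/n} ≥ e^{−d(a‖γ)}. Hence the threshold test ψ_n asymptotically minimizes the sum of type I and type II errors among all tests. -/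
open Filter Set

/-- Kullback–Leibler divergence `d(x‖y)` between `Bernoulli(x)` and `Bernoulli(y)`. -/
noncomputable def klBer (x y : ℝ) : ℝ :=
  x * Real.log (x / y) + (1 - x) * Real.log ((1 - x) / (1 - y))

/-- The critical level `a = (log(1−γ) − log(1−θ)) / (log θ + log(1−γ) − log γ − log(1−θ))`. -/
noncomputable def acrit (γ θ : ℝ) : ℝ :=
  (Real.log (1 - γ) - Real.log (1 - θ)) /
    (Real.log θ + Real.log (1 - γ) - Real.log γ - Real.log (1 - θ))

/-- Probability of the outcome `x ∈ {0,1}^n` under independent `Bernoulli(θs t)` coordinates. -/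
noncomputable def berWeight {n : ℕ} (θs : Fin n → ℝ) (x : Fin n → Bool) : ℝ :=
  ∏ t, if x t then θs t else 1 - θs t

/-- `ℙ(φ = 1)` when `X_{1:n}` are independent with `X_t ∼ Bernoulli(θs t)`. -/
noncomputable def rejProb {n : ℕ} (θs : Fin n → ℝ) (φ : (Fin n → Bool) → Bool) : ℝ :=
  ∑ x : Fin n → Bool, berWeight θs x * (if φ x then 1 else 0)

/-- `ℙ(φ = 0)` when `X_{1:n}` are independent with `X_t ∼ Bernoulli(θs t)`. -/
noncomputable def accProb {n : ℕ} (θs : Fin n → ℝ) (φ : (Fin n → Bool) → Bool) : ℝ :=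
  ∑ x : Fin n → Bool, berWeight θs x * (if φ x then 0 else 1)

/-- `∑_{t=1}^n X_t` for `x ∈ {0,1}^n`. -/
def countOnes {n : ℕ} (x : Fin n → Bool) : ℕ := ∑ t, if x t then 1 else 0

/-- The threshold test rejecting iff `∑_{t=1}^n X_t ≥ ⌈na⌉`. -/
noncomputable def ceilTest (a : ℝ) (n : ℕ) : (Fin n → Bool) → Bool :=
  fun x => decide ((⌈(n : ℝ) * a⌉ : ℤ) ≤ (countOnes x : ℤ))


/-!
Chernoff's bound with the optimal tilt `λ` bounds both errors of the threshold test by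
`e^{-n d(a‖γ)} = e^{-n d(a‖θ)}`; for the type II error this is uniform over `θ_t ∈ [θ, 1]`,
because the tilted factor `θ_t e^λ + 1 - θ_t` (with `λ ≤ 0`) decreases in `θ_t`.
Conversely, on the outcomes with exactly `k = ⌈na⌉` ones the likelihood ratio favours `θ`,
so every test errs with probability at least the `Bernoulli(γ)^{⊗n}` mass of this level set.
By the method of types and because `k` is the mode of `Binomial(n, k/n)`, this mass is at
least `e^{-n d(k/n‖γ)} / (n + 1)`, whose `n`-th root tends to `e^{-d(a‖γ)}`.
-/

open Real
open scoped Finset Topology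

lemma sub_lt_mul_log_div {x y : ℝ} (hx : 0 < x) (hy : 0 < y) (hxy : x ≠ y) :
    x - y < x * log (x / y) := by
  have hlog : log (y / x) < y / x - 1 :=
    log_lt_sub_one_of_pos (div_pos hy hx) (by rwa [ne_eq, div_eq_one_iff_eq hx.ne', eq_comm])
  have hxlog : x * log (y / x) < y - x := by
    calc x * log (y / x) < x * (y / x - 1) := mul_lt_mul_of_pos_left hlog hx
      _ = y - x := by field_simp
  rw [← inv_div, log_inv]
  linarith

lemma klBer_pos {x y : ℝ} (hx0 : 0 < x) (hx1 : x < 1) (hy0 : 0 < y) (hy1 : y < 1)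
    (hxy : x ≠ y) : 0 < klBer x y := by
  have h := sub_lt_mul_log_div hx0 hy0 hxy
  have h' := sub_lt_mul_log_div (sub_pos.2 hx1) (sub_pos.2 hy1) (by contrapose! hxy; linarith)
  rw [klBer]
  linarith

lemma klBer_self (x : ℝ) : klBer x x = 0 := by
  simp [klBer]

lemma acrit_denom_pos {γ θ : ℝ} (h0γ : 0 < γ) (hγθ : γ < θ) (hθ1 : θ < 1) :
    0 < log θ + log (1 - γ) - log γ - log (1 - θ) := by
  have h1 : log γ < log θ := log_lt_log h0γ hγθ
  have h2 : log (1 - θ) < log (1 - γ) := log_lt_log (by linarith) (by linarith)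
  linarith

lemma klBer_sub_klBer {γ θ x : ℝ} (h0γ : 0 < γ) (hγθ : γ < θ) (hθ1 : θ < 1)
    (hx0 : 0 < x) (hx1 : x < 1) :
    klBer x γ - klBer x θ
      = (x - acrit γ θ) * (log θ + log (1 - γ) - log γ - log (1 - θ)) := by
  have hD := (acrit_denom_pos h0γ hγθ hθ1).ne'
  rw [sub_mul, acrit, div_mul_cancel₀ _ hD, klBer, klBer,
    log_div hx0.ne' h0γ.ne', log_div hx0.ne' (h0γ.trans hγθ).ne',
    log_div (sub_pos.2 hx1).ne' (by linarith), log_div (sub_pos.2 hx1).ne' (by linarith)]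
  ring

lemma acrit_mem_Ioo {γ θ : ℝ} (h0γ : 0 < γ) (hγθ : γ < θ) (hθ1 : θ < 1) :
    acrit γ θ ∈ Ioo γ θ := by
  have hD := acrit_denom_pos h0γ hγθ hθ1
  have hγ := klBer_sub_klBer h0γ hγθ hθ1 h0γ (hγθ.trans hθ1)
  have hθ := klBer_sub_klBer h0γ hγθ hθ1 (h0γ.trans hγθ) hθ1
  have hklγθ := klBer_pos h0γ (hγθ.trans hθ1) (h0γ.trans hγθ) hθ1 hγθ.ne
  have hklθγ := klBer_pos (h0γ.trans hγθ) hθ1 h0γ (hγθ.trans hθ1) hγθ.ne'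
  rw [klBer_self] at hγ hθ
  constructor
  · nlinarith
  · nlinarith

lemma klBer_acrit {γ θ : ℝ} (h0γ : 0 < γ) (hγθ : γ < θ) (hθ1 : θ < 1) :
    klBer (acrit γ θ) γ = klBer (acrit γ θ) θ := by
  obtain ⟨hγa, haθ⟩ := acrit_mem_Ioo h0γ hγθ hθ1
  have h := klBer_sub_klBer h0γ hγθ hθ1 (h0γ.trans hγa) (haθ.trans hθ1)
  rw [sub_self, zero_mul, sub_eq_zero] at h
  exact h

section Bernoulli

variable {n : ℕ}

lemma berWeight_nonneg {θs : Fin n → ℝ} (hθs : ∀ t, θs t ∈ Icc 0 1) (x : Fin n → Bool) :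
    0 ≤ berWeight θs x :=
  Finset.prod_nonneg fun t _ => by
    cases x t <;> simp [(hθs t).1, (hθs t).2]

lemma sum_berWeight_mul_pow_countOnes (θs : Fin n → ℝ) (r : ℝ) :
    ∑ x : Fin n → Bool, berWeight θs x * r ^ countOnes x = ∏ t, (θs t * r + (1 - θs t)) := by
  have hterm : ∀ x : Fin n → Bool, berWeight θs x * r ^ countOnes x
      = ∏ t, if x t then θs t * r else 1 - θs t := by
    intro x
    rw [berWeight, countOnes, ← Finset.prod_pow_eq_pow_sum, ← Finset.prod_mul_distrib]
    exact Finset.prod_congr rfl fun t _ => by cases x t <;> simp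
  simp_rw [hterm]
  exact (Fintype.prod_sum fun t (b : Bool) => if b then θs t * r else 1 - θs t).symm.trans
    (by simp)

lemma sum_berWeight (θs : Fin n → ℝ) : ∑ x : Fin n → Bool, berWeight θs x = 1 := by
  simpa using sum_berWeight_mul_pow_countOnes θs 1

lemma rejProb_add_accProb (θs : Fin n → ℝ) (φ : (Fin n → Bool) → Bool) :
    rejProb θs φ + accProb θs φ = 1 := by
  rw [rejProb, accProb, ← Finset.sum_add_distrib]
  convert sum_berWeight θs using 2 with x
  cases φ x <;> simp

lemma rejProb_nonneg {θs : Fin n → ℝ} (hθs : ∀ t, θs t ∈ Icc 0 1)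
    (φ : (Fin n → Bool) → Bool) : 0 ≤ rejProb θs φ :=
  Finset.sum_nonneg fun x _ => mul_nonneg (berWeight_nonneg hθs x) (by split_ifs <;> norm_num)

lemma accProb_nonneg {θs : Fin n → ℝ} (hθs : ∀ t, θs t ∈ Icc 0 1)
    (φ : (Fin n → Bool) → Bool) : 0 ≤ accProb θs φ :=
  Finset.sum_nonneg fun x _ => mul_nonneg (berWeight_nonneg hθs x) (by split_ifs <;> norm_num)

lemma rejProb_le_one {θs : Fin n → ℝ} (hθs : ∀ t, θs t ∈ Icc 0 1)
    (φ : (Fin n → Bool) → Bool) : rejProb θs φ ≤ 1 := by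
  linarith [rejProb_add_accProb θs φ, accProb_nonneg hθs φ]

lemma accProb_le_one {θs : Fin n → ℝ} (hθs : ∀ t, θs t ∈ Icc 0 1)
    (φ : (Fin n → Bool) → Bool) : accProb θs φ ≤ 1 := by
  linarith [rejProb_add_accProb θs φ, rejProb_nonneg hθs φ]

lemma countOnes_eq_card (x : Fin n → Bool) : countOnes x = #{t | x t} := by
  rw [Finset.card_filter]
  rfl

lemma berWeight_const (p : ℝ) (x : Fin n → Bool) :
    berWeight (fun _ => p) x = p ^ countOnes x * (1 - p) ^ (n - countOnes x) := by
  rw [berWeight, Finset.prod_ite, Finset.prod_const, Finset.prod_const, countOnes_eq_card,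
    Finset.filter_not, Finset.card_sdiff_of_subset (Finset.filter_subset _ _),
    Finset.card_univ, Fintype.card_fin]

lemma card_countOnes_eq (k : ℕ) : #{x : Fin n → Bool | countOnes x = k} = n.choose k := by
  have hcard : #(Finset.powersetCard k (Finset.univ : Finset (Fin n))) = n.choose k := by simp
  rw [← hcard]
  refine Finset.card_nbij' (fun x => Finset.univ.filter fun t => x t)
    (fun S t => decide (t ∈ S)) ?_ ?_ ?_ ?_
  · intro x hx
    simp_all [Finset.mem_powersetCard, countOnes_eq_card]
  · intro S hS
    simp_all [Finset.mem_powersetCard, countOnes_eq_card]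
  · intro x _
    funext t
    simp
  · intro S _
    ext t
    simp

lemma sum_berWeight_countOnes_eq (p : ℝ) (k : ℕ) :
    ∑ x : Fin n → Bool with countOnes x = k, berWeight (fun _ => p) x
      = n.choose k * p ^ k * (1 - p) ^ (n - k) := by
  rw [Finset.sum_congr rfl fun x hx => by rw [berWeight_const, (Finset.mem_filter.1 hx).2],
    Finset.sum_const, card_countOnes_eq, nsmul_eq_mul, mul_assoc]

end Bernoulli

section Binomial

variable {n k : ℕ}

lemma choose_succ_mul_pow_mul_pow (s : ℝ) {j : ℕ} (hj : j < n) :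
    n.choose (j + 1) * s ^ (j + 1) * (1 - s) ^ (n - (j + 1)) * ((j + 1) * (1 - s))
      = n.choose j * s ^ j * (1 - s) ^ (n - j) * ((n - j) * s) := by
  have hc : (n.choose (j + 1) : ℝ) * (j + 1) = n.choose j * (n - j) := by
    rw [← Nat.cast_sub hj.le]
    exact_mod_cast Nat.choose_succ_right_eq n j
  rw [show n - j = n - (j + 1) + 1 by omega, pow_succ, pow_succ]
  linear_combination s ^ j * s * (1 - s) ^ (n - (j + 1)) * (1 - s) * hc

lemma choose_mul_pow_mul_pow_le_mode (hk0 : 0 < k) (hkn : k < n) (j : ℕ) :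
    n.choose j * ((k : ℝ) / n) ^ j * (1 - (k : ℝ) / n) ^ (n - j)
      ≤ n.choose k * ((k : ℝ) / n) ^ k * (1 - (k : ℝ) / n) ^ (n - k) := by
  set s : ℝ := (k : ℝ) / n
  set f : ℕ → ℝ := fun j => n.choose j * s ^ j * (1 - s) ^ (n - j) with hf
  have hn : (0 : ℝ) < n := by exact_mod_cast hk0.trans hkn
  have hs0 : 0 < s := by positivity
  have hs1 : s < 1 := by rw [div_lt_one hn]; exact_mod_cast hkn
  have hns : (n : ℝ) * s = k := mul_div_cancel₀ _ hn.ne'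
  have hf0 : ∀ j, 0 ≤ f j := fun j => by have := hs1.le; positivity
  have hratio : ∀ j < n, f (j + 1) * ((j + 1) * (1 - s)) = f j * ((n - j) * s) :=
    fun j hj => choose_succ_mul_pow_mul_pow s hj
  have hup : ∀ j < k, f j ≤ f (j + 1) := by
    intro j hj
    have hjk : ((j : ℝ) + 1) ≤ k := by exact_mod_cast hj
    refine le_of_mul_le_mul_right ?_ (by nlinarith : (0 : ℝ) < (j + 1) * (1 - s))
    rw [hratio j (hj.trans hkn)]
    exact mul_le_mul_of_nonneg_left (by nlinarith) (hf0 j)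
  have hdown : ∀ j ≥ k, f (j + 1) ≤ f j := by
    intro j hj
    rcases lt_or_ge j n with hjn | hjn
    · have hjk : (k : ℝ) ≤ j := by exact_mod_cast hj
      have hkn' : (k : ℝ) ≤ n := by exact_mod_cast hkn.le
      refine le_of_mul_le_mul_right ?_ (by nlinarith : (0 : ℝ) < (j + 1) * (1 - s))
      rw [hratio j hjn]
      exact mul_le_mul_of_nonneg_left (by nlinarith) (hf0 j)
    · simpa [hf, Nat.choose_eq_zero_of_lt (Nat.lt_succ_of_le hjn)] using hf0 j
  change f j ≤ f k
  rcases le_total j k with hjk | hkj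
  · have hanti : Antitone fun m => f (k - m) := antitone_nat_of_succ_le fun m => by
      rcases lt_or_ge m k with hm | hm
      · simpa [show k - m = k - (m + 1) + 1 by omega] using hup (k - (m + 1)) (by omega)
      · simp [show k - (m + 1) = k - m by omega]
    simpa [Nat.sub_sub_self hjk] using hanti (Nat.zero_le (k - j))
  · exact antitoneOn_nat_Ici_of_succ_le hdown (le_refl k) hkj hkj

lemma inv_succ_le_choose_mul_pow_mul_pow (hk0 : 0 < k) (hkn : k < n) :
    ((n : ℝ) + 1)⁻¹ ≤ n.choose k * ((k : ℝ) / n) ^ k * (1 - (k : ℝ) / n) ^ (n - k) := by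
  set s : ℝ := (k : ℝ) / n
  have hsum : ∑ j ∈ Finset.range (n + 1), n.choose j * s ^ j * (1 - s) ^ (n - j) = 1 := by
    have h := add_pow s (1 - s) n
    rw [add_sub_cancel, one_pow] at h
    exact (Finset.sum_congr rfl fun j _ => by ring).trans h.symm
  have hle := Finset.sum_le_card_nsmul (Finset.range (n + 1)) _ _
    fun j _ => choose_mul_pow_mul_pow_le_mode hk0 hkn j
  rw [hsum, Finset.card_range, nsmul_eq_mul] at hle
  rw [inv_le_iff_one_le_mul₀ (by positivity)]
  push_cast at hle
  linarith

lemma pow_mul_pow_eq_mul_exp_klBer {p : ℝ} (hk0 : 0 < k) (hkn : k < n) (hp0 : 0 < p)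
    (hp1 : p < 1) :
    p ^ k * (1 - p) ^ (n - k)
      = ((k : ℝ) / n) ^ k * (1 - (k : ℝ) / n) ^ (n - k) * exp (-(n * klBer ((k : ℝ) / n) p)) := by
  set s : ℝ := (k : ℝ) / n
  have hn : (0 : ℝ) < n := by exact_mod_cast hk0.trans hkn
  have hs0 : 0 < s := by positivity
  have hs1 : s < 1 := by rw [div_lt_one hn]; exact_mod_cast hkn
  have hns : (n : ℝ) * s = k := mul_div_cancel₀ _ hn.ne'
  have hnk : ((n - k : ℕ) : ℝ) = n - k := Nat.cast_sub hkn.le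
  have h1p : 0 < 1 - p := sub_pos.2 hp1
  have h1s : 0 < 1 - s := sub_pos.2 hs1
  rw [← exp_log (by positivity : 0 < p ^ k * (1 - p) ^ (n - k)),
    ← exp_log (by positivity : 0 < s ^ k * (1 - s) ^ (n - k)), ← exp_add]
  congr 1
  rw [log_mul (by positivity) (by positivity), log_mul (by positivity) (by positivity),
    log_pow, log_pow, log_pow, log_pow, hnk, klBer, log_div hs0.ne' hp0.ne',
    log_div h1s.ne' h1p.ne']
  linear_combination (log s - log p - log (1 - s) + log (1 - p)) * hns

end Binomial

section Tests

variable {n : ℕ}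

lemma ceilTest_eq_true_iff (a : ℝ) (x : Fin n → Bool) :
    ceilTest a n x = true ↔ n * a ≤ countOnes x := by
  rw [ceilTest, decide_eq_true_iff, Int.ceil_le]
  norm_cast

lemma sum_berWeight_mul_le_of_le_exp {θs : Fin n → ℝ} (hθs : ∀ t, θs t ∈ Icc 0 1)
    {f : (Fin n → Bool) → ℝ} {l c : ℝ} (hf : ∀ x, f x ≤ exp (l * (countOnes x - c))) :
    ∑ x, berWeight θs x * f x ≤ exp (-(l * c)) * ∏ t, (θs t * exp l + (1 - θs t)) := by
  calc ∑ x, berWeight θs x * f x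
      ≤ ∑ x, berWeight θs x * exp (l * (countOnes x - c)) :=
        Finset.sum_le_sum fun x _ => mul_le_mul_of_nonneg_left (hf x) (berWeight_nonneg hθs x)
    _ = exp (-(l * c)) * ∑ x, berWeight θs x * exp l ^ countOnes x := by
        rw [Finset.mul_sum]
        refine Finset.sum_congr rfl fun x _ => ?_
        rw [← exp_nat_mul, mul_left_comm, ← exp_add]
        ring_nf
    _ = exp (-(l * c)) * ∏ t, (θs t * exp l + (1 - θs t)) := by
        rw [sum_berWeight_mul_pow_countOnes]

/-- The parameter `λ` at which the Chernoff bound `exp(-λa) (p e^λ + 1 - p)` is optimal. -/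
noncomputable def chernoffParam (a p : ℝ) : ℝ := log (a * (1 - p) / (p * (1 - a)))

lemma exp_neg_chernoffParam_mul {a p : ℝ} (ha0 : 0 < a) (ha1 : a < 1) (hp0 : 0 < p)
    (hp1 : p < 1) :
    exp (-(chernoffParam a p * a)) * (p * exp (chernoffParam a p) + (1 - p))
      = exp (-klBer a p) := by
  have h1a : 0 < 1 - a := sub_pos.2 ha1
  have h1p : 0 < 1 - p := sub_pos.2 hp1
  have hmgf : p * exp (chernoffParam a p) + (1 - p) = exp (log ((1 - p) / (1 - a))) := by
    rw [chernoffParam, exp_log (by positivity), exp_log (by positivity)]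
    field_simp
    ring
  rw [hmgf, ← exp_add, chernoffParam, klBer, log_div (by positivity) (by positivity),
    log_mul ha0.ne' h1p.ne', log_mul hp0.ne' h1a.ne', log_div h1p.ne' h1a.ne',
    log_div ha0.ne' hp0.ne', log_div h1a.ne' h1p.ne']
  ring_nf

lemma rejProb_ceilTest_le {a p : ℝ} (hp0 : 0 < p) (hpa : p ≤ a) (ha1 : a < 1) :
    rejProb (fun _ : Fin n => p) (ceilTest a n) ≤ exp (-klBer a p) ^ n := by
  have hl : 0 ≤ chernoffParam a p :=
    log_nonneg ((one_le_div (by nlinarith)).2 (by nlinarith))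
  calc rejProb (fun _ : Fin n => p) (ceilTest a n)
      ≤ exp (-(chernoffParam a p * (n * a)))
          * ∏ _t : Fin n, (p * exp (chernoffParam a p) + (1 - p)) := by
        refine sum_berWeight_mul_le_of_le_exp (fun _ => ⟨hp0.le, by linarith⟩) fun x => ?_
        by_cases hx : ceilTest a n x = true
        · rw [if_pos hx]
          exact one_le_exp (mul_nonneg hl (sub_nonneg.2 ((ceilTest_eq_true_iff a x).1 hx)))
        · rw [if_neg hx]
          exact (exp_pos _).le
    _ = (exp (-(chernoffParam a p * a)) * (p * exp (chernoffParam a p) + (1 - p))) ^ n := by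
        rw [Finset.prod_const, Finset.card_univ, Fintype.card_fin, mul_pow, ← exp_nat_mul]
        ring_nf
    _ = exp (-klBer a p) ^ n := by
        rw [exp_neg_chernoffParam_mul (hp0.trans_le hpa) ha1 hp0 (hpa.trans_lt ha1)]

lemma accProb_ceilTest_le {a θ : ℝ} (ha0 : 0 < a) (haθ : a ≤ θ) (hθ1 : θ < 1)
    {θs : Fin n → ℝ} (hθs : ∀ t, θs t ∈ Icc θ 1) :
    accProb θs (ceilTest a n) ≤ exp (-klBer a θ) ^ n := by
  have hθ0 : 0 < θ := ha0.trans_le haθ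
  have hl : chernoffParam a θ ≤ 0 :=
    log_nonpos (div_nonneg (mul_nonneg ha0.le (by linarith)) (mul_nonneg hθ0.le (by linarith)))
      ((div_le_one (by nlinarith)).2 (by nlinarith))
  have hfactor : ∀ t, θs t * exp (chernoffParam a θ) + (1 - θs t)
      ≤ θ * exp (chernoffParam a θ) + (1 - θ) := fun t => by
    nlinarith [(hθs t).1, exp_le_one_iff.2 hl]
  calc accProb θs (ceilTest a n)
      ≤ exp (-(chernoffParam a θ * (n * a)))
          * ∏ t, (θs t * exp (chernoffParam a θ) + (1 - θs t)) := by
        refine sum_berWeight_mul_le_of_le_exp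
          (fun t => ⟨hθ0.le.trans (hθs t).1, (hθs t).2⟩) fun x => ?_
        by_cases hx : ceilTest a n x = true
        · rw [if_pos hx]
          exact (exp_pos _).le
        · rw [if_neg hx]
          rw [ceilTest_eq_true_iff, not_le] at hx
          exact one_le_exp (mul_nonneg_of_nonpos_of_nonpos hl (by linarith))
    _ ≤ exp (-(chernoffParam a θ * (n * a)))
          * ∏ _t : Fin n, (θ * exp (chernoffParam a θ) + (1 - θ)) := by
        refine mul_le_mul_of_nonneg_left (Finset.prod_le_prod (fun t _ => ?_)
          fun t _ => hfactor t) (exp_pos _).le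
        exact add_nonneg (mul_nonneg (hθ0.le.trans (hθs t).1) (exp_pos _).le)
          (sub_nonneg.2 (hθs t).2)
    _ = (exp (-(chernoffParam a θ * a)) * (θ * exp (chernoffParam a θ) + (1 - θ))) ^ n := by
        rw [Finset.prod_const, Finset.card_univ, Fintype.card_fin, mul_pow, ← exp_nat_mul]
        ring_nf
    _ = exp (-klBer a θ) ^ n := by
        rw [exp_neg_chernoffParam_mul ha0 (haθ.trans_lt hθ1) hθ0 hθ1]

lemma choose_mul_pow_le_rejProb_add_accProb {p q : ℝ} (hp : p ∈ Icc 0 1) (hq : q ∈ Icc 0 1)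
    {k : ℕ} (hpq : p ^ k * (1 - p) ^ (n - k) ≤ q ^ k * (1 - q) ^ (n - k))
    (φ : (Fin n → Bool) → Bool) :
    n.choose k * p ^ k * (1 - p) ^ (n - k)
      ≤ rejProb (fun _ => p) φ + accProb (fun _ => q) φ := by
  rw [← sum_berWeight_countOnes_eq, Finset.sum_filter, rejProb, accProb,
    ← Finset.sum_add_distrib]
  refine Finset.sum_le_sum fun x _ => ?_
  have hwp := berWeight_nonneg (fun _ => hp) x
  have hwq := berWeight_nonneg (fun _ => hq) x
  split_ifs with hk hφ hφ
  · simp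
  · rw [berWeight_const, berWeight_const, hk] at *
    simpa using hpq
  · simp [hwp]
  · simp [hwq]

end Tests

lemma inv_succ_mul_exp_le_rejProb_add_accProb {γ θ : ℝ} (h0γ : 0 < γ) (hγθ : γ < θ)
    (hθ1 : θ < 1) {n k : ℕ} (hk0 : 0 < k) (hkn : k < n) (hka : n * acrit γ θ ≤ k)
    (φ : (Fin n → Bool) → Bool) :
    ((n : ℝ) + 1)⁻¹ * exp (-(n * klBer ((k : ℝ) / n) γ))
      ≤ rejProb (fun _ => γ) φ + accProb (fun _ => θ) φ := by
  have hθ0 : 0 < θ := h0γ.trans hγθ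
  have hn : (0 : ℝ) < n := by exact_mod_cast hk0.trans hkn
  have hs0 : 0 < (k : ℝ) / n := by positivity
  have hs1 : (k : ℝ) / n < 1 := by rw [div_lt_one hn]; exact_mod_cast hkn
  have has : acrit γ θ ≤ (k : ℝ) / n := by rw [le_div_iff₀ hn]; linarith
  have hkl : klBer ((k : ℝ) / n) θ ≤ klBer ((k : ℝ) / n) γ := by
    have h := klBer_sub_klBer h0γ hγθ hθ1 hs0 hs1
    nlinarith [acrit_denom_pos h0γ hγθ hθ1]
  have htypeγ := pow_mul_pow_eq_mul_exp_klBer hk0 hkn h0γ (hγθ.trans hθ1)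
  have htypeθ := pow_mul_pow_eq_mul_exp_klBer hk0 hkn hθ0 hθ1
  have hγθ_weight : γ ^ k * (1 - γ) ^ (n - k) ≤ θ ^ k * (1 - θ) ^ (n - k) := by
    rw [htypeγ, htypeθ]
    have : 0 ≤ 1 - (k : ℝ) / n := by linarith
    gcongr
  calc ((n : ℝ) + 1)⁻¹ * exp (-(n * klBer ((k : ℝ) / n) γ))
      ≤ n.choose k * ((k : ℝ) / n) ^ k * (1 - (k : ℝ) / n) ^ (n - k)
          * exp (-(n * klBer ((k : ℝ) / n) γ)) :=
        mul_le_mul_of_nonneg_right (inv_succ_le_choose_mul_pow_mul_pow hk0 hkn) (exp_pos _).le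
    _ = n.choose k * γ ^ k * (1 - γ) ^ (n - k) := by rw [mul_assoc _ (γ ^ k), htypeγ]; ring
    _ ≤ rejProb (fun _ => γ) φ + accProb (fun _ => θ) φ :=
        choose_mul_pow_le_rejProb_add_accProb ⟨h0γ.le, by linarith⟩ ⟨hθ0.le, hθ1.le⟩
          hγθ_weight φ

lemma sSup_accProb_ceilTest_mem_Icc {a θ : ℝ} (ha0 : 0 < a) (haθ : a ≤ θ) (hθ1 : θ < 1)
    (n : ℕ) :
    sSup {e : ℝ | ∃ θs : Fin n → ℝ, (∀ t, θs t ∈ Icc θ 1) ∧ e = accProb θs (ceilTest a n)}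
      ∈ Icc (accProb (fun _ => θ) (ceilTest a n)) (exp (-klBer a θ) ^ n) := by
  have hbound : ∀ e ∈ {e : ℝ | ∃ θs : Fin n → ℝ, (∀ t, θs t ∈ Icc θ 1)
      ∧ e = accProb θs (ceilTest a n)}, e ≤ exp (-klBer a θ) ^ n := by
    rintro e ⟨θs, hθs, rfl⟩
    exact accProb_ceilTest_le ha0 haθ hθ1 hθs
  have hmem : accProb (fun _ => θ) (ceilTest a n) ∈ {e : ℝ | ∃ θs : Fin n → ℝ,
      (∀ t, θs t ∈ Icc θ 1) ∧ e = accProb θs (ceilTest a n)} :=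
    ⟨fun _ => θ, fun _ => ⟨le_rfl, hθ1.le⟩, rfl⟩
  exact ⟨le_csSup ⟨_, hbound⟩ hmem, csSup_le ⟨_, hmem⟩ hbound⟩

section Asymptotics

lemma eventually_ceil_mul_mem {a : ℝ} (ha0 : 0 < a) (ha1 : a < 1) :
    ∀ᶠ n : ℕ in atTop, 0 < ⌈(n : ℝ) * a⌉₊ ∧ ⌈(n : ℝ) * a⌉₊ < n := by
  have hlarge : Tendsto (fun n : ℕ => (n : ℝ) * (1 - a)) atTop atTop :=
    tendsto_natCast_atTop_atTop.atTop_mul_const (sub_pos.2 ha1)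
  filter_upwards [eventually_ge_atTop 1, hlarge.eventually_ge_atTop 1] with n hn1 hn2
  have hna : 0 < (n : ℝ) * a := mul_pos (by exact_mod_cast hn1) ha0
  refine ⟨Nat.ceil_pos.2 hna, ?_⟩
  have := Nat.ceil_lt_add_one hna.le
  exact_mod_cast (show (⌈(n : ℝ) * a⌉₊ : ℝ) < n by linarith)

lemma tendsto_const_rpow_inv_natCast {c : ℝ} (hc : 0 < c) :
    Tendsto (fun n : ℕ => c ^ (n : ℝ)⁻¹) atTop (𝓝 1) := by
  simpa [Function.comp_def] using ((continuousAt_const_rpow hc.ne').tendsto.comp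
    (tendsto_inv_atTop_zero.comp tendsto_natCast_atTop_atTop))

lemma tendsto_natCast_add_one_rpow_inv :
    Tendsto (fun n : ℕ => ((n : ℝ) + 1) ^ (n : ℝ)⁻¹) atTop (𝓝 1) := by
  have h := (tendsto_rpow_div_mul_add 1 1 (-1) one_ne_zero.symm).comp
    (tendsto_atTop_add_const_right _ 1 tendsto_natCast_atTop_atTop)
  refine h.congr fun n => ?_
  simp [one_div]

lemma continuousAt_klBer_left {a p : ℝ} (ha0 : a ≠ 0) (ha1 : a ≠ 1) (hp0 : p ≠ 0)
    (hp1 : p ≠ 1) : ContinuousAt (fun x => klBer x p) a := by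
  have h1a : 1 - a ≠ 0 := sub_ne_zero.2 (Ne.symm ha1)
  have h1p : 1 - p ≠ 0 := sub_ne_zero.2 (Ne.symm hp1)
  unfold klBer
  fun_prop (disch := simp [*])

lemma tendsto_inv_succ_mul_exp_rpow {a p : ℝ} (ha0 : 0 < a) (ha1 : a < 1) (hp0 : 0 < p)
    (hp1 : p < 1) :
    Tendsto (fun n : ℕ => (((n : ℝ) + 1)⁻¹ * exp (-(n * klBer (⌈(n : ℝ) * a⌉₊ / n) p)))
      ^ (n : ℝ)⁻¹) atTop (𝓝 (exp (-klBer a p))) := by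
  have hfrac : Tendsto (fun n : ℕ => (⌈(n : ℝ) * a⌉₊ : ℝ) / n) atTop (𝓝 a) := by
    simpa [mul_comm, Function.comp_def] using (tendsto_nat_ceil_mul_div_atTop ha0.le).comp
      (tendsto_natCast_atTop_atTop (R := ℝ))
  have hexp := (continuous_exp.continuousAt.comp (continuousAt_klBer_left ha0.ne' ha1.ne
    hp0.ne' hp1.ne).neg).tendsto.comp hfrac
  have hlim := tendsto_natCast_add_one_rpow_inv.inv₀ one_ne_zero |>.mul hexp
  rw [inv_one, one_mul] at hlim
  refine hlim.congr' ?_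
  filter_upwards [eventually_ge_atTop 1] with n hn1
  have hn : (n : ℝ) ≠ 0 := by positivity
  rw [mul_rpow (by positivity) (exp_pos _).le, inv_rpow (by positivity), ← exp_mul]
  simp only [Function.comp_apply, Pi.neg_apply]
  field_simp

lemma tendsto_two_mul_pow_rpow_inv {E : ℝ} (hE : 0 ≤ E) :
    Tendsto (fun n : ℕ => (2 * E ^ n) ^ (n : ℝ)⁻¹) atTop (𝓝 E) := by
  have hlim := (tendsto_const_rpow_inv_natCast two_pos).mul_const E
  rw [one_mul] at hlim
  refine hlim.congr' ?_
  filter_upwards [eventually_ge_atTop 1] with n hn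
  rw [mul_rpow zero_le_two (by positivity), pow_rpow_inv_natCast hE (by omega)]

end Asymptotics

lemma rejProb_add_accProb_rpow_inv_le_two {n : ℕ} {θs θs' : Fin n → ℝ}
    (hθs : ∀ t, θs t ∈ Icc 0 1) (hθs' : ∀ t, θs' t ∈ Icc 0 1) (φ : (Fin n → Bool) → Bool) :
    (rejProb θs φ + accProb θs' φ) ^ (n : ℝ)⁻¹ ≤ 2 :=
  calc (rejProb θs φ + accProb θs' φ) ^ (n : ℝ)⁻¹
      ≤ 2 ^ (n : ℝ)⁻¹ :=
        rpow_le_rpow (add_nonneg (rejProb_nonneg hθs φ) (accProb_nonneg hθs' φ))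
          (by linarith [rejProb_le_one hθs φ, accProb_le_one hθs' φ]) (by positivity)
    _ ≤ 2 ^ (1 : ℝ) := rpow_le_rpow_of_exponent_le one_le_two (Nat.cast_inv_le_one n)
    _ = 2 := rpow_one 2

lemma eventually_rpow_inv_le_rejProb_add_accProb {γ θ : ℝ} (h0γ : 0 < γ) (hγθ : γ < θ)
    (hθ1 : θ < 1) :
    ∀ᶠ n : ℕ in atTop, ∀ φ : (Fin n → Bool) → Bool,
      (((n : ℝ) + 1)⁻¹ * exp (-(n * klBer (⌈(n : ℝ) * acrit γ θ⌉₊ / n) γ))) ^ (n : ℝ)⁻¹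
        ≤ (rejProb (fun _ => γ) φ + accProb (fun _ => θ) φ) ^ (n : ℝ)⁻¹ := by
  obtain ⟨hγa, haθ⟩ := acrit_mem_Ioo h0γ hγθ hθ1
  filter_upwards [eventually_ceil_mul_mem (h0γ.trans hγa) (haθ.trans hθ1)] with n ⟨hk0, hkn⟩ φ
  exact rpow_le_rpow (by positivity) (inv_succ_mul_exp_le_rejProb_add_accProb h0γ hγθ hθ1
    hk0 hkn (Nat.le_ceil _) φ) (by positivity)

/-- For `0 < γ < θ < 1` and `a = acrit γ θ`: `a ∈ (γ, θ)`,
`d(a‖γ) = d(a‖θ)`, the test rejecting iff `∑ X_t ≥ ⌈na⌉` has worst-case sum of type I and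
type II errors decaying at exponential rate exactly `e^{−d(a‖γ)}` (the supremum being over all
independent `Bernoulli(θ_t)` alternatives with `θ_t ∈ [θ,1]`), and no sequence of tests can
beat this rate; hence the threshold test asymptotically minimizes the sum of the two errors. -/
theorem stmt_10
    (γ θ : ℝ) (h0γ : 0 < γ) (hγθ : γ < θ) (hθ1 : θ < 1) :
    acrit γ θ ∈ Set.Ioo γ θ
    ∧ klBer (acrit γ θ) γ = klBer (acrit γ θ) θ
    ∧ Filter.limsup (fun n : ℕ =>
        (rejProb (fun _ : Fin n => γ) (ceilTest (acrit γ θ) n)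
          + sSup {e : ℝ | ∃ θs : Fin n → ℝ, (∀ t, θs t ∈ Set.Icc θ 1)
              ∧ e = accProb θs (ceilTest (acrit γ θ) n)}) ^ ((n : ℝ)⁻¹)) atTop
        = Real.exp (-(klBer (acrit γ θ) γ))
    ∧ ∀ φ : (n : ℕ) → (Fin n → Bool) → Bool,
        Real.exp (-(klBer (acrit γ θ) γ))
          ≤ Filter.limsup (fun n : ℕ =>
              (rejProb (fun _ : Fin n => γ) (φ n)
                + accProb (fun _ : Fin n => θ) (φ n)) ^ ((n : ℝ)⁻¹)) atTop := by
  obtain ⟨hγa, haθ⟩ := acrit_mem_Ioo h0γ hγθ hθ1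
  have ha0 : 0 < acrit γ θ := h0γ.trans hγa
  have ha1 : acrit γ θ < 1 := haθ.trans hθ1
  have hγ1 : γ < 1 := hγθ.trans hθ1
  have hγI : γ ∈ Icc (0 : ℝ) 1 := ⟨h0γ.le, hγ1.le⟩
  have hθI : θ ∈ Icc (0 : ℝ) 1 := ⟨(h0γ.trans hγθ).le, hθ1.le⟩
  have hsup := sSup_accProb_ceilTest_mem_Icc ha0 haθ.le hθ1
  have hlim := tendsto_inv_succ_mul_exp_rpow ha0 ha1 h0γ hγ1
  have hlow := eventually_rpow_inv_le_rejProb_add_accProb h0γ hγθ hθ1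
  refine ⟨⟨hγa, haθ⟩, klBer_acrit h0γ hγθ hθ1, ?_, fun φ => ?_⟩
  · refine (tendsto_of_tendsto_of_tendsto_of_le_of_le' hlim
      (tendsto_two_mul_pow_rpow_inv (exp_pos _).le) ?_ ?_).limsup_eq
    · filter_upwards [hlow] with n hn
      exact (hn _).trans (rpow_le_rpow (add_nonneg (rejProb_nonneg (fun _ => hγI) _)
        (accProb_nonneg (fun _ => hθI) _)) (add_le_add le_rfl (hsup n).1) (by positivity))
    · refine Eventually.of_forall fun n => rpow_le_rpow ?_ ?_ (by positivity)
      · linarith [rejProb_nonneg (fun _ => hγI) (ceilTest (acrit γ θ) n),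
          accProb_nonneg (fun _ => hθI) (ceilTest (acrit γ θ) n), (hsup n).1]
      · rw [two_mul]
        refine add_le_add (rejProb_ceilTest_le h0γ hγa.le ha1) ?_
        rw [klBer_acrit h0γ hγθ hθ1]
        exact (hsup n).2
  · rw [← hlim.limsup_eq]
    exact limsup_le_limsup (hlow.mono fun n hn => hn (φ n))
      hlim.isBoundedUnder_ge.isCoboundedUnder_le
      (isBoundedUnder_of ⟨2, fun n =>
        rejProb_add_accProb_rpow_inv_le_two (fun _ => hγI) (fun _ => hθI) (φ n)⟩)
end

section
/- Define R = − inf_{λ ≥ 0} [ λ m_0 + sup_{β ∈ B} log ∫ e^{−λ h} dν_β ] ∈ [−∞, +∞]. Let (γ_n) be a sequence of real numbers with γ_n / n → m_0 as n → ∞ (for instance, γ_n chosen so that the test rejecting when ∑_{t=1}^n h(Y_t) ≥ γ_n has type I error exactly α ∈ (0,1) under i.i.d. sampling from μ_0). Then limsup_{n→∞} [ sup_{β_1, …, β_n ∈ B} ℙ( ∑_{t=1}^n h(Y_t) < γ_n ) ]^{1/n} ≤ e^{−R}, where inside the probability Y_1, …, Y_n are independent with Y_t ∼ ν_{β_t}.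 -/
/-!
Chernoff's bound: for every `λ ≥ 0`, Markov's inequality applied to `e^{λ (γ_n - ∑ h(Y_t))}` and
independence give `ℙ(∑ h(Y_t) < γ_n) ≤ e^{λ γ_n} M_λ^n` with `M_λ = sup_β ∫ e^{-λh} dν_β`, uniformly
in `β_1, …, β_n`. Taking `n`-th roots and `γ_n / n → m_0`, the limsup is at most `e^{λ m_0} M_λ`;
the infimum over `λ` is `e^{-R}` because `exp` and `log` are order isomorphisms.
-/

open MeasureTheory ProbabilityTheory Filter Set ENNReal

section Chernoff

variable {E ι : Type*} [MeasurableSpace E] [Fintype ι]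

lemma lintegral_pi_prod_eq_prod (μ : ι → Measure E) [∀ i, IsProbabilityMeasure (μ i)]
    {g : ι → E → ℝ≥0∞} (hg : ∀ i, Measurable (g i)) :
    ∫⁻ y, ∏ i, g i (y i) ∂Measure.pi μ = ∏ i, ∫⁻ x, g i x ∂μ i := by
  refine (lintegral_prod_eq_prod_lintegral_of_indepFun Finset.univ
    (fun i (y : ι → E) => g i (y i)) (iIndepFun_pi fun i => (hg i).aemeasurable)
    fun i => (hg i).comp (measurable_pi_apply i)).trans ?_
  exact Finset.prod_congr rfl fun i _ => (measurePreserving_eval μ i).lintegral_comp (hg i)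

lemma measure_pi_sum_lt_le (μ : ι → Measure E) [∀ i, IsProbabilityMeasure (μ i)]
    {h : E → ℝ} (hh : Measurable h) {l : ℝ} (hl : 0 ≤ l) (c : ℝ) :
    Measure.pi μ {y | ∑ i, h (y i) < c}
      ≤ ENNReal.ofReal (Real.exp (l * c)) *
          ∏ i, ∫⁻ x, ENNReal.ofReal (Real.exp (-l * h x)) ∂μ i := by
  set g : E → ℝ≥0∞ := fun x => ENNReal.ofReal (Real.exp (-l * h x))
  have hg : Measurable g := by fun_prop
  have hset : MeasurableSet {y : ι → E | ∑ i, h (y i) < c} :=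
    measurableSet_lt (by fun_prop) measurable_const
  have hexp (y : ι → E) : ENNReal.ofReal (Real.exp (l * c)) * ∏ i, g (y i)
      = ENNReal.ofReal (Real.exp (l * (c - ∑ i, h (y i)))) := by
    rw [← ENNReal.ofReal_prod_of_nonneg fun i _ => (Real.exp_pos _).le, ← Real.exp_sum,
      ← ENNReal.ofReal_mul (Real.exp_pos _).le, ← Real.exp_add, mul_sub, Finset.mul_sum]
    simp only [neg_mul, Finset.sum_neg_distrib, sub_eq_add_neg]
  have hmarkov : {y | ∑ i, h (y i) < c}.indicator (1 : (ι → E) → ℝ≥0∞)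
      ≤ fun y : ι → E => ENNReal.ofReal (Real.exp (l * c)) * ∏ i, g (y i) :=
    indicator_le fun y hy => by
      rw [hexp, Pi.one_apply, ENNReal.one_le_ofReal]
      exact Real.one_le_exp (mul_nonneg hl (sub_nonneg.2 (le_of_lt hy)))
  calc Measure.pi μ {y | ∑ i, h (y i) < c}
      = ∫⁻ y, {y | ∑ i, h (y i) < c}.indicator 1 y ∂Measure.pi μ :=
        (lintegral_indicator_one hset).symm
    _ ≤ ∫⁻ y, ENNReal.ofReal (Real.exp (l * c)) * ∏ i, g (y i) ∂Measure.pi μ :=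
        lintegral_mono hmarkov
    _ = _ := by
        rw [lintegral_const_mul _ (by fun_prop), lintegral_pi_prod_eq_prod μ fun _ => hg]

lemma iSup_measure_pi_sum_lt_le {B : Type*} (ν : B → Measure E)
    [∀ β, IsProbabilityMeasure (ν β)] {h : E → ℝ} (hh : Measurable h) {l : ℝ} (hl : 0 ≤ l)
    (c : ℝ) (n : ℕ) :
    ⨆ βs : Fin n → B, Measure.pi (fun t => ν (βs t)) {y | ∑ t, h (y t) < c}
      ≤ ENNReal.ofReal (Real.exp (l * c)) *
          (⨆ β, ∫⁻ x, ENNReal.ofReal (Real.exp (-l * h x)) ∂ν β) ^ n :=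
  iSup_le fun βs => (measure_pi_sum_lt_le _ hh hl c).trans <| by
    gcongr
    simpa using Finset.prod_le_pow_card Finset.univ _ _ fun t _ =>
      le_iSup (fun β => ∫⁻ x, ENNReal.ofReal (Real.exp (-l * h x)) ∂ν β) (βs t)

end Chernoff

lemma ENNReal.log_iSup {ι : Sort*} (f : ι → ℝ≥0∞) :
    ENNReal.log (⨆ i, f i) = ⨆ i, ENNReal.log (f i) :=
  ENNReal.logOrderIso.map_iSup f

lemma EReal.exp_iInf {ι : Sort*} (f : ι → EReal) :
    EReal.exp (⨅ i, f i) = ⨅ i, EReal.exp (f i) :=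
  EReal.expOrderIso.map_iInf f

lemma ofReal_exp_mul_pow_rpow_inv (l γ : ℝ) (M : ℝ≥0∞) {n : ℕ} (hn : n ≠ 0) :
    (ENNReal.ofReal (Real.exp (l * γ)) * M ^ n) ^ (n : ℝ)⁻¹
      = ENNReal.ofReal (Real.exp (l * (γ / n))) * M := by
  rw [ENNReal.mul_rpow_of_nonneg _ _ (by positivity), ENNReal.pow_rpow_inv_natCast hn,
    ENNReal.ofReal_rpow_of_pos (Real.exp_pos _), ← Real.exp_mul, ← mul_div_assoc, div_eq_mul_inv]

lemma limsup_rpow_inv_le {a : ℕ → ℝ≥0∞} {γ : ℕ → ℝ} {l m : ℝ} {M : ℝ≥0∞}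
    (hγ : Tendsto (fun n : ℕ => γ n / n) atTop (nhds m))
    (ha : ∀ n, a n ≤ ENNReal.ofReal (Real.exp (l * γ n)) * M ^ n) :
    limsup (fun n : ℕ => a n ^ (n : ℝ)⁻¹) atTop ≤ ENNReal.ofReal (Real.exp (l * m)) * M := by
  have hroot : ∀ᶠ n in atTop,
      a n ^ (n : ℝ)⁻¹ ≤ ENNReal.ofReal (Real.exp (l * (γ n / n))) * M := by
    filter_upwards [eventually_ne_atTop 0] with n hn
    rw [← ofReal_exp_mul_pow_rpow_inv l (γ n) M hn]
    exact ENNReal.rpow_le_rpow (ha n) (by positivity)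
  have hlim : Tendsto (fun n : ℕ => ENNReal.ofReal (Real.exp (l * (γ n / n))) * M) atTop
      (nhds (ENNReal.ofReal (Real.exp (l * m)) * M)) :=
    ENNReal.Tendsto.mul_const (ENNReal.tendsto_ofReal (hγ.const_mul l).rexp)
      (Or.inl (ENNReal.ofReal_pos.2 (Real.exp_pos _)).ne')
  exact (limsup_le_limsup hroot).trans hlim.limsup_eq.le

theorem stmt_12_general
    {E : Type*} [MeasurableSpace E]
    (μ0 : Measure E)
    (h : E → ℝ) (hmeas : Measurable h)
    {B : Type*}
    (ν : B → Measure E) [∀ β, IsProbabilityMeasure (ν β)]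
    (R : EReal)
    (hR : R = -(⨅ l : {l : ℝ // 0 ≤ l},
      ((l.1 * ∫ x, h x ∂μ0 : ℝ) : EReal)
        + ⨆ β : B,
            ENNReal.log (∫⁻ x, ENNReal.ofReal (Real.exp (-l.1 * h x)) ∂(ν β))))
    (γn : ℕ → ℝ)
    (hγn : Tendsto (fun n : ℕ => γn n / n) atTop (nhds (∫ x, h x ∂μ0))) :
    Filter.limsup (fun n : ℕ =>
        (⨆ βs : Fin n → B,
          Measure.pi (fun t => ν (βs t)) {y | ∑ t, h (y t) < γn n}) ^ ((n : ℝ)⁻¹))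
      atTop
      ≤ EReal.exp (-R) := by
  rw [hR, neg_neg, EReal.exp_iInf]
  refine le_iInf fun ⟨l, hl⟩ => ?_
  rw [← ENNReal.log_iSup, EReal.exp_add, ENNReal.exp_log, EReal.exp_coe]
  exact limsup_rpow_inv_le hγn fun n => iSup_measure_pi_sum_lt_le ν hmeas hl (γn n) n

/-- Let `μ0` be the null law of the pivotal statistic, `h` a score with
`∫|h| dμ0 < ∞` and `m0 = ∫ h dμ0`, and `{ν β}` the family of alternative laws. Define
`R = − inf_{λ ≥ 0} [λ m0 + sup_β log ∫ e^{−λh} dν_β] ∈ [−∞,+∞]` (conventions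
`log(+∞) = +∞`, `e^{−∞} = 0`). If `γ_n / n → m0` (e.g. `γ_n` calibrated so that the threshold
test has type I error exactly `α`), then
`limsup_n [sup_{β_1,…,β_n} ℙ(∑_t h(Y_t) < γ_n)]^{1/n} ≤ e^{−R}`, where `Y_t` are independent
with `Y_t ∼ ν_{β_t}`. -/
theorem stmt_12
    {E : Type*} [MeasurableSpace E]
    (μ0 : Measure E) [IsProbabilityMeasure μ0]
    (h : E → ℝ) (hmeas : Measurable h) (hint : Integrable h μ0)
    {B : Type*} [Nonempty B]
    (ν : B → Measure E) [∀ β, IsProbabilityMeasure (ν β)]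
    (R : EReal)
    (hR : R = -(⨅ l : {l : ℝ // 0 ≤ l},
      ((l.1 * ∫ x, h x ∂μ0 : ℝ) : EReal)
        + ⨆ β : B,
            ENNReal.log (∫⁻ x, ENNReal.ofReal (Real.exp (-l.1 * h x)) ∂(ν β))))
    (γn : ℕ → ℝ)
    (hγn : Tendsto (fun n : ℕ => γn n / n) atTop (nhds (∫ x, h x ∂μ0))) :
    Filter.limsup (fun n : ℕ =>
        (⨆ βs : Fin n → B,
          Measure.pi (fun t => ν (βs t)) {y | ∑ t, h (y t) < γn n}) ^ ((n : ℝ)⁻¹))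
      atTop
      ≤ EReal.exp (-R) :=
  stmt_12_general μ0 h hmeas ν R hR γn hγn
end

section
/- Define S = − inf_{λ_1 > 0, λ_2 > 0} [ (λ_2/(λ_1+λ_2)) · log ∫ e^{λ_1 h} dμ_0 + (λ_1/(λ_1+λ_2)) · log sup_{β ∈ B} ∫ e^{−λ_2 h} dν_β ] ∈ [−∞, +∞]. Then limsup_{n→∞} [ inf_{γ ∈ ℝ} ( ℙ_{μ_0^{⊗n}}( ∑_{t=1}^n h(Y_t) ≥ γ ) + sup_{β_1,…,β_n ∈ B} ℙ( ∑_{t=1}^n h(Y_t) < γ ) ) ]^{1/n} ≤ e^{−S}, where in the first probability Y_1,…,Y_n are i.i.d. with law μ_0 and in the second probability Y_1,…,Y_n are independent with Y_t ∼ ν_{β_t}; that is, with a suitably chosen threshold, the sum of the worst-case type I and type II errors of the threshold test based on ∑ h(Y_t) decays at exponential rate at least S. -/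
open MeasureTheory ProbabilityTheory Filter Set ENNReal

/-!
For fixed `λ₁, λ₂ > 0` this is a Chernoff bound. Put `M₁ = ∫ e^{λ₁ h} dμ₀` and
`M₂ = sup_β ∫ e^{-λ₂ h} dν_β`. At the threshold `γ = n c`, Markov's inequality for
`e^{λ₁ (∑ h - n c)}` and `e^{λ₂ (n c - ∑ h)}`, with the independence of the coordinates, bounds the
type I error by `(e^{-λ₁ c} M₁)^n` and every type II error by `(e^{λ₂ c} M₂)^n`. The choice
`c = (log M₁ - log M₂) / (λ₁ + λ₂)` makes both bases equal to `M₁^{λ₂/(λ₁+λ₂)} M₂^{λ₁/(λ₁+λ₂)}`,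
so the `n`-th root of the error sum is at most `2^{1/n}` times this. Since `exp : EReal → ℝ≥0∞`
is an order isomorphism it commutes with the infimum over `λ₁, λ₂`, which gives `e^{-S}`.
-/

section Chernoff

variable {ι E : Type*} [Fintype ι] [MeasurableSpace E]

/-- Unlike `ProbabilityTheory.mgf`, this is `∞` (not `0`) when `e^{l f}` is not integrable. -/
noncomputable def emgf (μ : Measure E) (f : E → ℝ) (l : ℝ) : ℝ≥0∞ :=
  ∫⁻ x, ENNReal.ofReal (Real.exp (l * f x)) ∂μ

lemma emgf_neg (μ : Measure E) (f : E → ℝ) (l : ℝ) :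
    emgf μ (fun x => -f x) l = emgf μ f (-l) := by
  simp only [emgf, mul_neg, neg_mul]

lemma emgf_ne_zero (μ : Measure E) [NeZero μ] {f : E → ℝ} (hf : Measurable f) (l : ℝ) :
    emgf μ f l ≠ 0 := by
  have hmeas : Measurable fun x => ENNReal.ofReal (Real.exp (l * f x)) := by fun_prop
  simp [emgf, lintegral_eq_zero_iff hmeas, Filter.EventuallyEq, Real.exp_pos, NeZero.ne μ]

lemma lintegral_pi_prod (μ : ι → Measure E) [∀ i, IsProbabilityMeasure (μ i)]
    (f : ι → E → ℝ≥0∞) (hf : ∀ i, Measurable (f i)) :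
    ∫⁻ y, ∏ i, f i (y i) ∂Measure.pi μ = ∏ i, ∫⁻ x, f i x ∂μ i := by
  rw [lintegral_prod_eq_prod_lintegral_of_indepFun _ _
    (iIndepFun_pi fun i => (hf i).aemeasurable) fun i => (hf i).comp (measurable_pi_apply i)]
  exact Finset.prod_congr rfl fun i _ => (measurePreserving_eval μ i).lintegral_comp (hf i)

lemma measure_pi_le_sum_le_prod_emgf {f : E → ℝ} (hf : Measurable f) (μ : ι → Measure E)
    [∀ i, IsProbabilityMeasure (μ i)] {l : ℝ} (hl : 0 ≤ l) (c : ℝ) :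
    Measure.pi μ {y | c ≤ ∑ i, f (y i)}
      ≤ ENNReal.ofReal (Real.exp (-(l * c))) * ∏ i, emgf (μ i) f l := by
  have hS : Measurable fun y : ι → E => ∑ i, f (y i) :=
    Finset.measurable_sum _ fun i _ => hf.comp (measurable_pi_apply i)
  calc Measure.pi μ {y | c ≤ ∑ i, f (y i)}
      ≤ ∫⁻ y, ENNReal.ofReal (Real.exp (l * (∑ i, f (y i) - c))) ∂Measure.pi μ := by
        rw [← lintegral_indicator_one (measurableSet_le measurable_const hS)]
        refine lintegral_mono fun y => ?_
        by_cases hy : c ≤ ∑ i, f (y i)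
        · simpa [hy] using mul_nonneg hl (sub_nonneg.2 hy)
        · simp [hy]
    _ = ENNReal.ofReal (Real.exp (-(l * c))) * ∏ i, emgf (μ i) f l := by
        simp only [emgf]
        rw [← lintegral_pi_prod μ (fun _ x => ENNReal.ofReal (Real.exp (l * f x)))
          (fun i => by fun_prop), ← lintegral_const_mul _ (by fun_prop)]
        refine lintegral_congr fun y => ?_
        rw [← ENNReal.ofReal_prod_of_nonneg fun i _ => (Real.exp_pos _).le, ← Real.exp_sum,
          ← ENNReal.ofReal_mul (Real.exp_pos _).le, ← Real.exp_add, ← Finset.mul_sum]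
        ring_nf

end Chernoff

lemma ENNReal.ofReal_exp_mul_natCast (x : ℝ) (n : ℕ) :
    ENNReal.ofReal (Real.exp (x * n)) = ENNReal.ofReal (Real.exp x) ^ n := by
  rw [mul_comm, Real.exp_nat_mul, ENNReal.ofReal_pow (Real.exp_pos _).le]

lemma ENNReal.tendsto_rpow_inv_natCast {K : ℝ≥0∞} (h0 : K ≠ 0) (htop : K ≠ ∞) :
    Tendsto (fun n : ℕ => K ^ (n : ℝ)⁻¹) atTop (nhds 1) := by
  have hk : 0 < K.toReal := ENNReal.toReal_pos h0 htop
  have hreal : Tendsto (fun n : ℕ => K.toReal ^ (n : ℝ)⁻¹) atTop (nhds 1) := by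
    simpa [Function.comp_def] using ((Real.continuous_const_rpow hk.ne').tendsto 0).comp
      tendsto_inv_atTop_nhds_zero_nat
  simpa [← ENNReal.ofReal_rpow_of_pos hk, ENNReal.ofReal_toReal htop] using
    (ENNReal.tendsto_ofReal hreal)

lemma ENNReal.limsup_rpow_inv_le_of_le_mul_pow {u : ℕ → ℝ≥0∞} {K C : ℝ≥0∞} (hK : K ≠ ∞)
    (hu : ∀ n, u n ≤ K * C ^ n) :
    limsup (fun n : ℕ => u n ^ (n : ℝ)⁻¹) atTop ≤ C := by
  have hroot : ∀ᶠ n : ℕ in atTop, u n ^ (n : ℝ)⁻¹ ≤ (K + 1) ^ (n : ℝ)⁻¹ * C := by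
    filter_upwards [eventually_ne_atTop 0] with n hn
    calc u n ^ (n : ℝ)⁻¹ ≤ ((K + 1) * C ^ n) ^ (n : ℝ)⁻¹ := by
          gcongr
          exact (hu n).trans (by gcongr; exact le_self_add)
      _ = (K + 1) ^ (n : ℝ)⁻¹ * C := by
          rw [ENNReal.mul_rpow_of_nonneg _ _ (by positivity), ENNReal.pow_rpow_inv_natCast hn]
  calc limsup (fun n : ℕ => u n ^ (n : ℝ)⁻¹) atTop
      ≤ limsup (fun n : ℕ => (K + 1) ^ (n : ℝ)⁻¹ * C) atTop := limsup_le_limsup hroot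
    _ = C := by
      simpa using (ENNReal.Tendsto.mul_const (b := C)
        (ENNReal.tendsto_rpow_inv_natCast (K := K + 1) (by simp) (by simp [hK]))
        (Or.inl one_ne_zero)).limsup_eq

lemma Real.exists_exp_mul_balance {m₁ m₂ : ℝ} (hm₁ : 0 < m₁) (hm₂ : 0 < m₂) {l₁ l₂ : ℝ}
    (hl : 0 < l₁ + l₂) :
    ∃ c : ℝ, Real.exp (-(l₁ * c)) * m₁ = m₁ ^ (l₂ / (l₁ + l₂)) * m₂ ^ (l₁ / (l₁ + l₂))
      ∧ Real.exp (l₂ * c) * m₂ = m₁ ^ (l₂ / (l₁ + l₂)) * m₂ ^ (l₁ / (l₁ + l₂)) := by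
  have hexp {m : ℝ} (hm : 0 < m) (x : ℝ) : Real.exp x * m = Real.exp (x + Real.log m) := by
    rw [Real.exp_add, Real.exp_log hm]
  refine ⟨(Real.log m₁ - Real.log m₂) / (l₁ + l₂), ?_, ?_⟩ <;>
  · simp only [hexp hm₁, hexp hm₂, Real.rpow_def_of_pos hm₁, Real.rpow_def_of_pos hm₂,
      ← Real.exp_add]
    congr 1
    field_simp
    ring

lemma ENNReal.exists_ofReal_exp_mul_balance {M₁ M₂ : ℝ≥0∞} (hM₁ : M₁ ≠ 0) (hM₁' : M₁ ≠ ∞)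
    (hM₂ : M₂ ≠ 0) (hM₂' : M₂ ≠ ∞) {l₁ l₂ : ℝ} (hl : 0 < l₁ + l₂) :
    ∃ c : ℝ, ENNReal.ofReal (Real.exp (-(l₁ * c))) * M₁
        = M₁ ^ (l₂ / (l₁ + l₂)) * M₂ ^ (l₁ / (l₁ + l₂))
      ∧ ENNReal.ofReal (Real.exp (l₂ * c)) * M₂
        = M₁ ^ (l₂ / (l₁ + l₂)) * M₂ ^ (l₁ / (l₁ + l₂)) := by
  have hm₁ := ENNReal.toReal_pos hM₁ hM₁'
  have hm₂ := ENNReal.toReal_pos hM₂ hM₂'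
  obtain ⟨c, hc₁, hc₂⟩ := Real.exists_exp_mul_balance hm₁ hm₂ hl
  refine ⟨c, ?_, ?_⟩ <;>
  · rw [← ENNReal.ofReal_toReal hM₁', ← ENNReal.ofReal_toReal hM₂',
      ENNReal.ofReal_rpow_of_pos hm₁, ENNReal.ofReal_rpow_of_pos hm₂,
      ← ENNReal.ofReal_mul (Real.exp_pos _).le, ← ENNReal.ofReal_mul (by positivity)]
    simp only [hc₁, hc₂]

lemma EReal.exp_mul_log_add_mul_log (a b : ℝ) (x y : ℝ≥0∞) :
    EReal.exp (a * ENNReal.log x + b * ENNReal.log y) = x ^ a * y ^ b := by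
  rw [← ENNReal.log_rpow, ← ENNReal.log_rpow, ← ENNReal.log_mul_add, ENNReal.exp_log]

section ThresholdTest

variable {E B : Type*} [MeasurableSpace E]

noncomputable def thresholdErrorSum (μ0 : Measure E) (ν : B → Measure E) (h : E → ℝ) (n : ℕ)
    (γ : ℝ) : ℝ≥0∞ :=
  Measure.pi (fun _ : Fin n => μ0) {y | γ ≤ ∑ t, h (y t)}
    + ⨆ βs : Fin n → B, Measure.pi (fun t => ν (βs t)) {y | ∑ t, h (y t) < γ}

variable (μ0 : Measure E) [IsProbabilityMeasure μ0] (ν : B → Measure E)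
  [∀ β, IsProbabilityMeasure (ν β)] {h : E → ℝ}

lemma iInf_thresholdErrorSum_le (hmeas : Measurable h) {l₁ l₂ : ℝ} (hl₁ : 0 ≤ l₁) (hl₂ : 0 ≤ l₂)
    (c : ℝ) (n : ℕ) :
    ⨅ γ, thresholdErrorSum μ0 ν h n γ
      ≤ (ENNReal.ofReal (Real.exp (-(l₁ * c))) * emgf μ0 h l₁) ^ n
        + (ENNReal.ofReal (Real.exp (l₂ * c)) * ⨆ β, emgf (ν β) h (-l₂)) ^ n := by
  refine (iInf_le _ (n * c)).trans (add_le_add ?_ (iSup_le fun βs => ?_))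
  · calc Measure.pi (fun _ : Fin n => μ0) {y | n * c ≤ ∑ t, h (y t)}
        ≤ ENNReal.ofReal (Real.exp (-(l₁ * (n * c)))) * ∏ _ : Fin n, emgf μ0 h l₁ :=
          measure_pi_le_sum_le_prod_emgf hmeas _ hl₁ _
      _ = _ := by
          rw [Finset.prod_const, Finset.card_univ, Fintype.card_fin, mul_pow,
            ← ENNReal.ofReal_exp_mul_natCast]
          ring_nf
  · calc Measure.pi (fun t => ν (βs t)) {y | ∑ t, h (y t) < n * c}
        ≤ Measure.pi (fun t => ν (βs t)) {y | -(n * c) ≤ ∑ t, -h (y t)} :=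
          measure_mono fun y hy => by
            simp only [mem_ofPred_eq, Finset.sum_neg_distrib, neg_le_neg_iff] at hy ⊢
            exact hy.le
      _ ≤ ENNReal.ofReal (Real.exp (-(l₂ * -(n * c))))
            * ∏ t, emgf (ν (βs t)) (fun x => -h x) l₂ :=
          measure_pi_le_sum_le_prod_emgf hmeas.neg _ hl₂ _
      _ ≤ ENNReal.ofReal (Real.exp (l₂ * c * n)) * (⨆ β, emgf (ν β) h (-l₂)) ^ n := by
          rw [show -(l₂ * -(n * c)) = l₂ * c * n by ring]
          simp only [emgf_neg]
          gcongr
          exact (Finset.prod_le_prod' fun t _ =>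
            le_iSup (fun β => emgf (ν β) h (-l₂)) (βs t)).trans_eq (by simp)
      _ = _ := by rw [mul_pow, ENNReal.ofReal_exp_mul_natCast]

lemma limsup_iInf_thresholdErrorSum_le [Nonempty B] (hmeas : Measurable h) {l₁ l₂ : ℝ}
    (hl₁ : 0 < l₁) (hl₂ : 0 < l₂) :
    limsup (fun n : ℕ => (⨅ γ, thresholdErrorSum μ0 ν h n γ) ^ (n : ℝ)⁻¹) atTop
      ≤ emgf μ0 h l₁ ^ (l₂ / (l₁ + l₂)) * (⨆ β, emgf (ν β) h (-l₂)) ^ (l₁ / (l₁ + l₂)) := by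
  set M₁ := emgf μ0 h l₁
  set M₂ := ⨆ β, emgf (ν β) h (-l₂)
  have hM₁ : M₁ ≠ 0 := emgf_ne_zero μ0 hmeas l₁
  have hM₂ : M₂ ≠ 0 := ne_bot_of_le_ne_bot (emgf_ne_zero (ν (Classical.arbitrary B)) hmeas (-l₂))
    (le_iSup (fun β => emgf (ν β) h (-l₂)) _)
  have ha : 0 < l₂ / (l₁ + l₂) := by positivity
  have hb : 0 < l₁ / (l₁ + l₂) := by positivity
  rcases eq_or_ne M₁ ∞ with hM₁' | hM₁'
  · rw [hM₁', ENNReal.top_rpow_of_pos ha,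
      ENNReal.top_mul (by simp [ENNReal.rpow_eq_zero_iff, hM₂, hb.le])]
    exact le_top
  rcases eq_or_ne M₂ ∞ with hM₂' | hM₂'
  · rw [hM₂', ENNReal.top_rpow_of_pos hb,
      ENNReal.mul_top (by simp [ENNReal.rpow_eq_zero_iff, hM₁, ha.le])]
    exact le_top
  obtain ⟨c, hc₁, hc₂⟩ :=
    ENNReal.exists_ofReal_exp_mul_balance hM₁ hM₁' hM₂ hM₂' (add_pos hl₁ hl₂)
  refine ENNReal.limsup_rpow_inv_le_of_le_mul_pow (K := 2) ENNReal.ofNat_ne_top fun n => ?_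
  calc ⨅ γ, thresholdErrorSum μ0 ν h n γ
      ≤ (ENNReal.ofReal (Real.exp (-(l₁ * c))) * M₁) ^ n
        + (ENNReal.ofReal (Real.exp (l₂ * c)) * M₂) ^ n :=
        iInf_thresholdErrorSum_le μ0 ν hmeas hl₁.le hl₂.le c n
    _ = 2 * (M₁ ^ (l₂ / (l₁ + l₂)) * M₂ ^ (l₁ / (l₁ + l₂))) ^ n := by rw [hc₁, hc₂, two_mul]

end ThresholdTest

theorem stmt_14_general
    {E : Type*} [MeasurableSpace E]
    (μ0 : Measure E) [IsProbabilityMeasure μ0]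
    (h : E → ℝ) (hmeas : Measurable h)
    {B : Type*} [Nonempty B]
    (ν : B → Measure E) [∀ β, IsProbabilityMeasure (ν β)]
    (S : EReal)
    (hS : S = -(⨅ l₁ : {l : ℝ // 0 < l}, ⨅ l₂ : {l : ℝ // 0 < l},
      ((l₂.1 / (l₁.1 + l₂.1) : ℝ) : EReal)
          * ENNReal.log (∫⁻ x, ENNReal.ofReal (Real.exp (l₁.1 * h x)) ∂μ0)
        + ((l₁.1 / (l₁.1 + l₂.1) : ℝ) : EReal)
          * ENNReal.log (⨆ β : B,
              ∫⁻ x, ENNReal.ofReal (Real.exp (-l₂.1 * h x)) ∂(ν β)))) :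
    Filter.limsup (fun n : ℕ =>
        (⨅ γ : ℝ,
          (Measure.pi (fun _ : Fin n => μ0) {y | γ ≤ ∑ t, h (y t)}
            + ⨆ βs : Fin n → B,
                Measure.pi (fun t => ν (βs t)) {y | ∑ t, h (y t) < γ})) ^ ((n : ℝ)⁻¹))
      atTop
      ≤ EReal.exp (-S) := by
  rw [hS, neg_neg, ← EReal.expOrderIso_apply]
  simp only [OrderIso.map_iInf, EReal.expOrderIso_apply, EReal.exp_mul_log_add_mul_log]
  exact le_iInf₂ fun l₁ l₂ => limsup_iInf_thresholdErrorSum_le μ0 ν hmeas l₁.2 l₂.2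

/-- Let `μ0` be the null law of the pivotal statistic, `h` a score with
`∫|h| dμ0 < ∞`, and `{ν β}` the family of alternative laws. Define
`S = − inf_{λ₁,λ₂ > 0} [ (λ₂/(λ₁+λ₂)) log ∫ e^{λ₁ h} dμ0
  + (λ₁/(λ₁+λ₂)) log sup_β ∫ e^{−λ₂ h} dν_β ] ∈ [−∞,+∞]` (conventions `log(+∞) = +∞`,
`e^{−∞} = 0`). Then
`limsup_n [ inf_γ ( ℙ_{μ0^{⊗n}}(∑ h(Y_t) ≥ γ) + sup_{β_1,…,β_n} ℙ(∑ h(Y_t) < γ) ) ]^{1/n}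
  ≤ e^{−S}`: with a suitably chosen threshold, the sum of the worst-case type I and type II
errors of the threshold test based on `∑ h(Y_t)` decays at exponential rate at least `S`. -/
theorem stmt_14
    {E : Type*} [MeasurableSpace E]
    (μ0 : Measure E) [IsProbabilityMeasure μ0]
    (h : E → ℝ) (hmeas : Measurable h) (hint : Integrable h μ0)
    {B : Type*} [Nonempty B]
    (ν : B → Measure E) [∀ β, IsProbabilityMeasure (ν β)]
    (S : EReal)
    (hS : S = -(⨅ l₁ : {l : ℝ // 0 < l}, ⨅ l₂ : {l : ℝ // 0 < l},
      ((l₂.1 / (l₁.1 + l₂.1) : ℝ) : EReal)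
          * ENNReal.log (∫⁻ x, ENNReal.ofReal (Real.exp (l₁.1 * h x)) ∂μ0)
        + ((l₁.1 / (l₁.1 + l₂.1) : ℝ) : EReal)
          * ENNReal.log (⨆ β : B,
              ∫⁻ x, ENNReal.ofReal (Real.exp (-l₂.1 * h x)) ∂(ν β)))) :
    Filter.limsup (fun n : ℕ =>
        (⨅ γ : ℝ,
          (Measure.pi (fun _ : Fin n => μ0) {y | γ ≤ ∑ t, h (y t)}
            + ⨆ βs : Fin n → B,
                Measure.pi (fun t => ν (βs t)) {y | ∑ t, h (y t) < γ})) ^ ((n : ℝ)⁻¹))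
      atTop
      ≤ EReal.exp (-S) :=
  stmt_14_general μ0 h hmeas ν S hS
end
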